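/- arXiv:1006.1090 — 5 statements merged into one kernel-verified Lean document; each statement's English description precedes it below -/
import Mathlib

section
/- Let r and s be coprime integers with 2 ≤ r < s, g = (r−1)(s−1)/2, N the increasing enumeration of the numerical semigroup generated by r and s, and Λ_i = g − N(i−1) + (i−1) for i = 1, …, g. Then Σ_{i=1}^{g} Λ_i = (r²−1)(s²−1)/24. -/
/-- Membership in the numerical semigroup generated by `r` and `s`. -/
def inSg (r s n : ℕ) : Prop := ∃ a b : ℕ, n = a * r + b * s

/-- The Young diagram row lengths `Λ i = g - N(i-1) + (i-1)` attached to the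
Weierstrass gap sequence. -/
def Lam (g : ℕ) (N : ℕ → ℕ) (i : ℕ) : ℕ := g + (i - 1) - N (i - 1)

open Finset

section Core
variable {r s : ℕ}

lemma injOn_mulmod (hr : 0 < r) (hco : Nat.Coprime r s) :
    Set.InjOn (fun b => b * s % r) (Finset.range r) := by
  intro a ha b hb hab
  simp only [Finset.coe_range, Set.mem_Iio] at ha hb
  have h : a * s ≡ b * s [MOD r] := hab
  have := Nat.ModEq.cancel_right_of_coprime (by simpa [Nat.Coprime] using hco.symm.symm) h
  have := this.eq_of_lt_of_lt ha hb
  exact this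

lemma image_mulmod (hr : 0 < r) (hco : Nat.Coprime r s) :
    (Finset.range r).image (fun b => b * s % r) = Finset.range r := by
  apply Finset.eq_of_subset_of_card_le
  · intro x hx
    simp only [Finset.mem_image] at hx
    obtain ⟨b, _, rfl⟩ := hx
    exact Finset.mem_range.2 (Nat.mod_lt _ hr)
  · rw [Finset.card_image_of_injOn (injOn_mulmod hr hco)]

lemma sum_mulmod (hr : 0 < r) (hco : Nat.Coprime r s) (f : ℕ → ℕ) :
    ∑ b ∈ Finset.range r, f (b * s % r) = ∑ b ∈ Finset.range r, f b := by
  rw [← Finset.sum_image (fun x hx y hy h => injOn_mulmod hr hco hx hy h),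
    image_mulmod hr hco]

lemma exists_b (hr : 0 < r) (hco : Nat.Coprime r s) (m : ℕ) :
    ∃ b, b < r ∧ m ≡ b * s [MOD r] := by
  have : m % r ∈ (Finset.range r).image (fun b => b * s % r) := by
    rw [image_mulmod hr hco]; exact Finset.mem_range.2 (Nat.mod_lt _ hr)
  simp only [Finset.mem_image, Finset.mem_range] at this
  obtain ⟨b, hb, hbe⟩ := this
  exact ⟨b, hb, by unfold Nat.ModEq; omega⟩

lemma mem_iff (hr : 0 < r) (hco : Nat.Coprime r s) {m b : ℕ} (hb : b < r)
    (hcong : m ≡ b * s [MOD r]) : inSg r s m ↔ b * s ≤ m := by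
  constructor
  · rintro ⟨a, b', rfl⟩
    have h1 : b' % r * s ≡ b' * s [MOD r] := Nat.ModEq.mul_right s (Nat.mod_modEq b' r)
    have h2 : a * r + b' * s ≡ b' * s [MOD r] := by
      simpa using (Nat.ModEq.add_right (b' * s) (Nat.modEq_zero_iff_dvd.2 (dvd_mul_left r a)))
    have h3 : b * s ≡ b' % r * s [MOD r] := hcong.symm.trans (h2.trans h1.symm)
    have hb' : b = b' % r := by
      have := Nat.ModEq.cancel_right_of_coprime (by simpa [Nat.Coprime] using hco.symm.symm) h3
      exact this.eq_of_lt_of_lt hb (Nat.mod_lt _ hr)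
    calc b * s = b' % r * s := by rw [hb']
    _ ≤ b' * s := Nat.mul_le_mul_right s (Nat.mod_le _ _)
    _ ≤ a * r + b' * s := Nat.le_add_left _ _
  · intro hle
    have hdvd : r ∣ m - b * s := (Nat.modEq_iff_dvd' hle).1 hcong.symm
    obtain ⟨a, ha⟩ := hdvd
    exact ⟨a, b, by have := mul_comm r a; omega⟩

lemma notMem_iff (hr : 0 < r) (hco : Nat.Coprime r s) {m b : ℕ} (hb : b < r)
    (hcong : m ≡ b * s [MOD r]) : ¬ inSg r s m ↔ m < b * s := by
  rw [mem_iff hr hco hb hcong]; omega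

end Core

section Sym
variable {r s : ℕ}

lemma hF_eq (hr : 2 ≤ r) (hrs : r < s) : (r*s - r - s) + r + s = r * s := by
  have : 2 * s ≤ r * s := Nat.mul_le_mul_right s hr
  omega

lemma sym (hr : 2 ≤ r) (hrs : r < s) (hco : Nat.Coprime r s) {m : ℕ}
    (hm : m ≤ r*s - r - s) : inSg r s m ↔ ¬ inSg r s (r*s - r - s - m) := by
  have hr0 : 0 < r := by omega
  have hF : (r*s - r - s) + r + s = r * s := hF_eq hr hrs
  obtain ⟨b, hb, hcong⟩ := exists_b hr0 hco m
  have hb' : r - 1 - b < r := by omega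
  have e1 : (r - 1 - b) * s + (b * s + s) = r * s := by
    have h : ((r - 1 - b) + b + 1) * s = r * s := by congr 1; omega
    calc (r - 1 - b) * s + (b * s + s) = ((r - 1 - b) + b + 1) * s := by ring
    _ = r * s := h
  have cong2 : r*s - r - s - m ≡ (r - 1 - b) * s [MOD r] := by
    have l1 : (r*s - r - s - m) + (b*s + s) ≡ (r*s - r - s - m) + (m + s) [MOD r] :=
      Nat.ModEq.add_left _ (Nat.ModEq.add_right s hcong.symm)
    have l2 : (r*s - r - s - m) + (m + s) = (r*s - r - s) + s := by omega
    have l3 : r ∣ (r*s - r - s) + s := by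
      have h5 : r * (s-1) + r = r * s := by rw [← Nat.mul_succ]; congr 1; omega
      exact ⟨s-1, by omega⟩
    have l4 : r ∣ (r - 1 - b) * s + (b * s + s) := by rw [e1]; exact ⟨s, rfl⟩
    have l5 : (r*s - r - s - m) + (b*s + s) ≡ (r - 1 - b) * s + (b * s + s) [MOD r] := by
      calc (r*s - r - s - m) + (b*s + s) ≡ (r*s - r - s) + s [MOD r] := by rw [← l2]; exact l1
      _ ≡ 0 [MOD r] := Nat.modEq_zero_iff_dvd.2 l3
      _ ≡ (r - 1 - b) * s + (b * s + s) [MOD r] := (Nat.modEq_zero_iff_dvd.2 l4).symm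
    exact Nat.ModEq.add_right_cancel' _ l5
  rw [mem_iff hr0 hco hb hcong, notMem_iff hr0 hco hb' cong2]
  have hd : b*s ≤ m ∨ m + r ≤ b*s := by
    rcases le_or_gt (b*s) m with h | h
    · exact Or.inl h
    · right
      obtain ⟨k, hk⟩ := (Nat.modEq_iff_dvd' h.le).1 hcong
      have hk1 : 1 ≤ k := by
        rcases Nat.eq_zero_or_pos k with h0 | h0
        · subst h0; simp at hk; omega
        · exact h0
      have : r * 1 ≤ r * k := Nat.mul_le_mul_left r hk1
      omega
  rcases hd with h | h <;> omega

end Sym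

open scoped Classical

section Count
variable {r s g : ℕ} {N : ℕ → ℕ}

lemma pred_mul {r s : ℕ} (hr : 1 ≤ r) (hs : 1 ≤ s) : (r-1)*(s-1) + r + s = r*s + 1 := by
  obtain ⟨a, rfl⟩ : ∃ a, r = a+1 := ⟨r-1, by omega⟩
  obtain ⟨b, rfl⟩ : ∃ b, s = b+1 := ⟨s-1, by omega⟩
  simp; ring

lemma two_g (hr : 2 ≤ r) (hrs : r < s) (hg : 2 * g = (r - 1) * (s - 1)) :
    2 * g = r*s - r - s + 1 := by
  have := pred_mul (r := r) (s := s) (by omega) (by omega)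
  have := hF_eq hr hrs
  omega

lemma card_T [DecidablePred (inSg r s)] (hr : 2 ≤ r) (hrs : r < s) (hco : Nat.Coprime r s)
    (hg : 2 * g = (r - 1) * (s - 1)) :
    ((Finset.range (2*g)).filter (inSg r s)).card = g := by
  have h2g : 2 * g = r*s - r - s + 1 := two_g hr hrs hg
  have hcard : ((Finset.range (2*g)).filter (inSg r s)).card
      = ((Finset.range (2*g)).filter (fun m => ¬ inSg r s m)).card := by
    apply Finset.card_bij (fun m _ => r*s - r - s - m)
    · intro m hm
      simp only [Finset.mem_filter, Finset.mem_range] at hm ⊢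
      refine ⟨by omega, ?_⟩
      exact ((sym hr hrs hco (by omega)).1 hm.2)
    · intro m hm m' hm' h
      simp only [Finset.mem_filter, Finset.mem_range] at hm hm'
      omega
    · intro m hm
      simp only [Finset.mem_filter, Finset.mem_range] at hm
      refine ⟨r*s - r - s - m, ?_, by omega⟩
      simp only [Finset.mem_filter, Finset.mem_range]
      refine ⟨by omega, ?_⟩
      by_contra hns
      exact hm.2 ((sym hr hrs hco (by omega)).2 hns)
  have htot := Finset.card_filter_add_card_filter_not
    (s := Finset.range (2*g)) (inSg r s)
  rw [Finset.card_range] at htot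
  omega

lemma card_below [DecidablePred (inSg r s)] (hmono : StrictMono N)
    (hmem : ∀ n, inSg r s (N n)) (hsurj : ∀ m, inSg r s m → ∃ n, N n = m) (n : ℕ) :
    ((Finset.range (N n)).filter (inSg r s)).card = n := by
  have himg : (Finset.range (N n)).filter (inSg r s) = (Finset.range n).image N := by
    ext m
    simp only [Finset.mem_filter, Finset.mem_image, Finset.mem_range]
    constructor
    · rintro ⟨hlt, hin⟩
      obtain ⟨k, rfl⟩ := hsurj m hin
      exact ⟨k, hmono.lt_iff_lt.1 hlt, rfl⟩
    · rintro ⟨k, hk, rfl⟩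
      exact ⟨hmono.lt_iff_lt.2 hk, hmem k⟩
  rw [himg, Finset.card_image_of_injective _ hmono.injective, Finset.card_range]

lemma N_image [DecidablePred (inSg r s)] (hr : 2 ≤ r) (hrs : r < s) (hco : Nat.Coprime r s)
    (hg : 2 * g = (r - 1) * (s - 1)) (hmono : StrictMono N)
    (hmem : ∀ n, inSg r s (N n)) (hsurj : ∀ m, inSg r s m → ∃ n, N n = m) :
    (Finset.range g).image N = (Finset.range (2*g)).filter (inSg r s) := by
  have hT := card_T hr hrs hco hg
  apply Finset.eq_of_subset_of_card_le
  · intro x hx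
    simp only [Finset.mem_image, Finset.mem_range] at hx
    obtain ⟨n, hn, rfl⟩ := hx
    simp only [Finset.mem_filter, Finset.mem_range]
    refine ⟨?_, hmem n⟩
    by_contra hge
    push_neg at hge
    have hsub : (Finset.range (2*g)).filter (inSg r s)
        ⊆ (Finset.range (N n)).filter (inSg r s) :=
      Finset.filter_subset_filter _ (Finset.range_subset_range.2 hge)
    have := Finset.card_le_card hsub
    rw [hT, card_below hmono hmem hsurj] at this
    omega
  · rw [hT, Finset.card_image_of_injective _ hmono.injective, Finset.card_range]

lemma sum_N [DecidablePred (inSg r s)] (hr : 2 ≤ r) (hrs : r < s) (hco : Nat.Coprime r s)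
    (hg : 2 * g = (r - 1) * (s - 1)) (hmono : StrictMono N)
    (hmem : ∀ n, inSg r s (N n)) (hsurj : ∀ m, inSg r s m → ∃ n, N n = m) :
    ∑ n ∈ Finset.range g, N n = ∑ m ∈ (Finset.range (2*g)).filter (inSg r s), m := by
  rw [← N_image hr hrs hco hg hmono hmem hsurj]
  rw [Finset.sum_image (fun x _ y _ h => hmono.injective h)]

end Count

section GapSum
variable {r s : ℕ}

lemma id_sum_int (n : ℕ) : (∑ b ∈ Finset.range n, (b:ℤ)) * 2 = n*(n-1) := by
  induction n with
  | zero => simp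
  | succ k ih => rw [Finset.sum_range_succ]; push_cast; push_cast at ih; linear_combination ih

lemma sq_sum_int (n : ℕ) : (∑ b ∈ Finset.range n, (b:ℤ)^2) * 6 = n*(n-1)*(2*n-1) := by
  induction n with
  | zero => simp
  | succ k ih => rw [Finset.sum_range_succ]; push_cast; push_cast at ih; linear_combination ih

lemma icc_sum_int (q : ℕ) : (∑ k ∈ Finset.Icc 1 q, (k:ℤ)) * 2 = q*(q+1) := by
  induction q with
  | zero => simp
  | succ k ih =>
    rw [Finset.sum_Icc_succ_top (by omega)]
    push_cast; push_cast at ih; linear_combination ih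

lemma gap_inner_sum (hr0 : 0 < r) (b : ℕ) :
    2 * (r:ℤ) * (∑ k ∈ Finset.Icc 1 (b*s/r), (((b*s:ℕ):ℤ) - (k:ℤ)*(r:ℤ))) =
      (((b*s:ℕ):ℤ) - ((b*s % r : ℕ):ℤ)) * (((b*s:ℕ):ℤ) + ((b*s % r : ℕ):ℤ) - (r:ℤ)) := by
  have hqc : r * (b*s/r) + b*s % r = b*s := Nat.div_add_mod _ _
  have hqcz : (r:ℤ) * ((b*s/r : ℕ):ℤ) + ((b*s % r : ℕ):ℤ) = ((b*s:ℕ):ℤ) := by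
    exact_mod_cast congrArg (Nat.cast : ℕ → ℤ) hqc
  have hsum : (∑ k ∈ Finset.Icc 1 (b*s/r), (((b*s:ℕ):ℤ) - (k:ℤ)*(r:ℤ)))
      = ((b*s/r : ℕ):ℤ) * ((b*s:ℕ):ℤ) - (∑ k ∈ Finset.Icc 1 (b*s/r), (k:ℤ)) * (r:ℤ) := by
    rw [Finset.sum_sub_distrib, Finset.sum_const, Nat.card_Icc, Finset.sum_mul]
    simp [nsmul_eq_mul]
  rw [hsum]
  have hicc := icc_sum_int (b*s/r)
  set q : ℤ := ((b*s/r : ℕ):ℤ)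
  set c : ℤ := ((b*s % r : ℕ):ℤ)
  set B : ℤ := ((b*s:ℕ):ℤ)
  set K : ℤ := (∑ k ∈ Finset.Icc 1 (b*s/r), (k:ℤ))
  linear_combination (B - (r:ℤ)*q - (r:ℤ) + c) * hqcz - (r:ℤ)^2 * hicc

end GapSum

lemma gap_sigma (hr : 2 ≤ r) (hrs : r < s) (hco : Nat.Coprime r s) :
    ∑ p ∈ (Finset.range r).sigma (fun b => Finset.Icc 1 (b*s/r)), (p.1*s - p.2*r)
      = ∑ m ∈ (Finset.range (r*s - r - s + 1)).filter (fun m => ¬ inSg r s m), m := by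
  have hr0 : 0 < r := by omega
  have hF : (r*s - r - s) + r + s = r * s := hF_eq hr hrs
  have congr_of : ∀ b k : ℕ, 1 ≤ k → k * r ≤ b * s → b*s - k*r ≡ b*s [MOD r] := by
    intro b k hk1 hkr
    refine (Nat.modEq_iff_dvd' (by omega)).2 ?_
    have h : b*s - (b*s - k*r) = k*r := by omega
    rw [h]
    exact dvd_mul_left r k
  apply Finset.sum_bij (fun p _ => p.1*s - p.2*r)
  · rintro ⟨b, k⟩ hp
    dsimp only
    simp only [Finset.mem_sigma, Finset.mem_range, Finset.mem_Icc] at hp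
    have hb := hp.1
    have hk1 := hp.2.1
    have hk2 := hp.2.2
    have hkr : k * r ≤ b * s := (Nat.le_div_iff_mul_le hr0).1 hk2
    have hr_le : 1 * r ≤ k * r := Nat.mul_le_mul_right r hk1
    have hbs : b * s ≤ (r-1) * s := Nat.mul_le_mul_right s (by omega)
    have hps : (r-1)*s + s = r*s := by
      calc (r-1)*s + s = ((r-1)+1)*s := by ring
      _ = r*s := by congr 1; omega
    rw [Finset.mem_filter, Finset.mem_range]
    constructor
    · show b*s - k*r < r*s - r - s + 1
      omega
    · show ¬ inSg r s (b*s - k*r)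
      exact (notMem_iff hr0 hco hb (congr_of b k hk1 hkr)).2 (by omega)
  · rintro ⟨b, k⟩ hp ⟨b', k'⟩ hp' heq
    simp only [Finset.mem_sigma, Finset.mem_range, Finset.mem_Icc] at hp hp'
    have hb := hp.1
    have hk1 := hp.2.1
    have hk2 := hp.2.2
    have hb' := hp'.1
    have hk1' := hp'.2.1
    have hk2' := hp'.2.2
    have hkr : k * r ≤ b * s := (Nat.le_div_iff_mul_le hr0).1 hk2
    have hkr' : k' * r ≤ b' * s := (Nat.le_div_iff_mul_le hr0).1 hk2'
    simp only at heq
    have hc1 := congr_of b k hk1 hkr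
    have hc2 := congr_of b' k' hk1' hkr'
    rw [heq] at hc1
    have hbb : b * s ≡ b' * s [MOD r] := (hc2.symm.trans hc1).symm
    have hbb' : b = b' := by
      have := Nat.ModEq.cancel_right_of_coprime
        (by simpa [Nat.Coprime] using hco.symm.symm) hbb
      exact this.eq_of_lt_of_lt hb hb'
    subst hbb'
    have hkk : k * r = k' * r := by omega
    have : k = k' := Nat.eq_of_mul_eq_mul_right hr0 hkk
    subst this
    rfl
  · intro m hm
    rw [Finset.mem_filter, Finset.mem_range] at hm
    obtain ⟨hmlt, hnm⟩ := hm
    obtain ⟨b, hb, hcong⟩ := exists_b hr0 hco m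
    have hlt : m < b * s := (notMem_iff hr0 hco hb hcong).1 hnm
    obtain ⟨k, hk⟩ := (Nat.modEq_iff_dvd' hlt.le).1 hcong
    have hrk : r * k = k * r := mul_comm r k
    have hk1 : 1 ≤ k := by
      rcases Nat.eq_zero_or_pos k with h0 | h0
      · subst h0; simp at hk; omega
      · exact h0
    have hk2 : k ≤ b*s/r := (Nat.le_div_iff_mul_le hr0).2 (by omega)
    exact ⟨⟨b, k⟩, Finset.mem_sigma.2 ⟨Finset.mem_range.2 hb, Finset.mem_Icc.2 ⟨hk1, hk2⟩⟩,
      show b*s - k*r = m by omega⟩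
  · intro p hp
    rfl

lemma gap_sum_z (hr : 2 ≤ r) (hrs : r < s) (hco : Nat.Coprime r s) :
    12 * ((∑ m ∈ (Finset.range (r*s - r - s + 1)).filter (fun m => ¬ inSg r s m), m : ℕ) : ℤ)
      = ((r:ℤ)-1)*((s:ℤ)-1)*(2*(r:ℤ)*(s:ℤ) - (r:ℤ) - (s:ℤ) - 1) := by
  have hr0 : 0 < r := by omega
  have h1 : ((∑ m ∈ (Finset.range (r*s - r - s + 1)).filter (fun m => ¬ inSg r s m), m : ℕ) : ℤ)
      = ∑ b ∈ Finset.range r, ∑ k ∈ Finset.Icc 1 (b*s/r), (((b*s:ℕ):ℤ) - (k:ℤ)*(r:ℤ)) := by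
    rw [← gap_sigma hr hrs hco, Nat.cast_sum, Finset.sum_sigma]
    refine Finset.sum_congr rfl (fun b _ => ?_)
    refine Finset.sum_congr rfl (fun k hk => ?_)
    rw [Finset.mem_Icc] at hk
    have hkr : k * r ≤ b * s := (Nat.le_div_iff_mul_le hr0).1 hk.2
    show ((b*s - k*r : ℕ) : ℤ) = _
    push_cast [Nat.cast_sub hkr]
    ring
  have h2 : 2 * (r:ℤ) * ((∑ m ∈ (Finset.range (r*s - r - s + 1)).filter
        (fun m => ¬ inSg r s m), m : ℕ) : ℤ)
      = ∑ b ∈ Finset.range r,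
          ((((b*s:ℕ):ℤ) - ((b*s % r : ℕ):ℤ)) * (((b*s:ℕ):ℤ) + ((b*s % r : ℕ):ℤ) - (r:ℤ))) := by
    rw [h1, Finset.mul_sum]
    exact Finset.sum_congr rfl (fun b _ => gap_inner_sum hr0 b)
  have h3 : ∑ b ∈ Finset.range r,
        ((((b*s:ℕ):ℤ) - ((b*s % r : ℕ):ℤ)) * (((b*s:ℕ):ℤ) + ((b*s % r : ℕ):ℤ) - (r:ℤ)))
      = ∑ b ∈ Finset.range r,
        ((s:ℤ)^2*(b:ℤ)^2 - ((b*s % r : ℕ):ℤ)^2 - (r:ℤ)*(s:ℤ)*(b:ℤ) + (r:ℤ)*((b*s % r : ℕ):ℤ)) := by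
    refine Finset.sum_congr rfl (fun b _ => ?_)
    push_cast
    ring
  have hc1 : ∑ b ∈ Finset.range r, ((b*s % r : ℕ):ℤ) = ∑ b ∈ Finset.range r, (b:ℤ) := by
    have h := sum_mulmod hr0 hco (fun x => x)
    have h' := congrArg (Nat.cast : ℕ → ℤ) h
    push_cast at h'
    exact h'
  have hc2 : ∑ b ∈ Finset.range r, ((b*s % r : ℕ):ℤ)^2 = ∑ b ∈ Finset.range r, (b:ℤ)^2 := by
    have h := sum_mulmod hr0 hco (fun x => x^2)
    have h' := congrArg (Nat.cast : ℕ → ℤ) h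
    push_cast at h'
    exact h'
  have h4 : ∑ b ∈ Finset.range r,
        ((s:ℤ)^2*(b:ℤ)^2 - ((b*s % r : ℕ):ℤ)^2 - (r:ℤ)*(s:ℤ)*(b:ℤ) + (r:ℤ)*((b*s % r : ℕ):ℤ))
      = ((s:ℤ)^2 - 1) * (∑ b ∈ Finset.range r, (b:ℤ)^2)
        - ((r:ℤ)*(s:ℤ) - (r:ℤ)) * (∑ b ∈ Finset.range r, (b:ℤ)) := by
    rw [Finset.sum_add_distrib, Finset.sum_sub_distrib, Finset.sum_sub_distrib,
      ← Finset.mul_sum, ← Finset.mul_sum, ← Finset.mul_sum, hc1, hc2]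
    ring
  have hq := sq_sum_int r
  have hl := id_sum_int r
  have hrne : (r:ℤ) ≠ 0 := by exact_mod_cast Nat.pos_iff_ne_zero.1 hr0
  apply mul_left_cancel₀ hrne
  rw [show (r:ℤ) * (12 * ((∑ m ∈ (Finset.range (r*s - r - s + 1)).filter
      (fun m => ¬ inSg r s m), m : ℕ) : ℤ))
    = 6 * (2 * (r:ℤ) * ((∑ m ∈ (Finset.range (r*s - r - s + 1)).filter
      (fun m => ¬ inSg r s m), m : ℕ) : ℤ)) by ring, h2, h3, h4]
  push_cast at hq hl ⊢
  linear_combination ((s:ℤ)^2 - 1) * hq - 3*(r:ℤ)*((s:ℤ)-1) * hl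

theorem young_diagram_size' (r s g : ℕ) (N : ℕ → ℕ)
    (hr : 2 ≤ r) (hrs : r < s) (hco : Nat.Coprime r s)
    (hg : 2 * g = (r - 1) * (s - 1))
    (hmono : StrictMono N)
    (hmem : ∀ n, inSg r s (N n))
    (hsurj : ∀ m, inSg r s m → ∃ n, N n = m) :
    24 * ∑ i ∈ Finset.Icc 1 g, Lam g N i = (r ^ 2 - 1) * (s ^ 2 - 1) := by
  classical
  have h2g : 2 * g = r*s - r - s + 1 := two_g hr hrs hg
  have hg1 : 1 ≤ g := by
    have h2 : 1 * 2 ≤ (r-1)*(s-1) := Nat.mul_le_mul (by omega) (by omega)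
    omega
  have hT := card_T (g := g) hr hrs hco hg
  have htot := Finset.card_filter_add_card_filter_not
    (s := Finset.range (2*g)) (inSg r s)
  rw [Finset.card_range, hT] at htot
  have hGcard : ((Finset.range (2*g)).filter (fun m => ¬ inSg r s m)).card = g := by omega
  have himg := N_image hr hrs hco hg hmono hmem hsurj
  have hNle : ∀ j, j < g → N j ≤ g + j := by
    intro j hj
    have hmemT : N j ∈ (Finset.range (2*g)).filter (inSg r s) := by
      rw [← himg]
      exact Finset.mem_image_of_mem N (Finset.mem_range.2 hj)
    rw [Finset.mem_filter, Finset.mem_range] at hmemT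
    have hcb := card_below hmono hmem hsurj j
    have hsplit := Finset.card_filter_add_card_filter_not
      (s := Finset.range (N j)) (inSg r s)
    rw [Finset.card_range] at hsplit
    have hsub : (Finset.range (N j)).filter (fun m => ¬ inSg r s m) ⊆
        (Finset.range (2*g)).filter (fun m => ¬ inSg r s m) :=
      Finset.filter_subset_filter _ (Finset.range_subset_range.2 hmemT.1.le)
    have hle := Finset.card_le_card hsub
    omega
  have q2 := sum_N hr hrs hco hg hmono hmem hsurj
  have reindex : ∑ i ∈ Finset.Icc 1 g, Lam g N i
      = ∑ j ∈ Finset.range g, (g + j - N j) := by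
    have hIcc : Finset.Icc 1 g = Finset.Ico 1 (g+1) := by rw [Finset.Ico_add_one_right_eq_Icc]
    rw [hIcc, Finset.sum_Ico_eq_sum_range]
    refine Finset.sum_congr (by simp) (fun j hj => ?_)
    show Lam g N (1 + j) = g + j - N j
    unfold Lam
    rw [show 1 + j - 1 = j by omega]
  have q1 : ∑ j ∈ Finset.range g, (g + j - N j) + ∑ j ∈ Finset.range g, N j
      = g * g + ∑ j ∈ Finset.range g, j := by
    rw [← Finset.sum_add_distrib]
    have : ∀ j ∈ Finset.range g, (g + j - N j) + N j = g + j := by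
      intro j hj
      rw [Finset.mem_range] at hj
      have := hNle j hj
      omega
    rw [Finset.sum_congr rfl this, Finset.sum_add_distrib, Finset.sum_const,
      Finset.card_range, smul_eq_mul]
  have gauss1 := Finset.sum_range_id_mul_two g
  have gauss2 := Finset.sum_range_id_mul_two (2*g)
  have q3 := Finset.sum_filter_add_sum_filter_not (Finset.range (2*g)) (inSg r s) id
  simp only [id] at q3
  have q4 : 12 * ((∑ m ∈ (Finset.range (2*g)).filter (fun m => ¬ inSg r s m), m : ℕ) : ℤ)
      = ((r:ℤ)-1)*((s:ℤ)-1)*(2*(r:ℤ)*(s:ℤ) - (r:ℤ) - (s:ℤ) - 1) := by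
    rw [h2g]
    exact gap_sum_z hr hrs hco
  rw [reindex]
  obtain ⟨g', rfl⟩ : ∃ g', g = g' + 1 := ⟨g - 1, by omega⟩
  have hgg : (g'+1) * ((g'+1) - 1) + (g'+1) = (g'+1) * (g'+1) := by
    rw [show (g'+1) - 1 = g' by omega]; ring
  have h4 : 2*(g'+1)*(2*(g'+1)-1) + 2*(g'+1) = 4*((g'+1)*(g'+1)) := by
    rw [show 2*(g'+1) - 1 = 2*g'+1 by omega]; ring
  have key : 24 * (∑ j ∈ Finset.range (g'+1), ((g'+1) + j - N j)) + 12*((g'+1)*(g'+1))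
      = 12*(g'+1) + 24 * (∑ m ∈ (Finset.range (2*(g'+1))).filter
          (fun m => ¬ inSg r s m), m) := by
    have aux : ∀ G B C D E Y NN : ℕ,
      B + NN = G*G + C → NN = D → C * 2 = G*(G-1) → G*(G-1) + G = G*G →
      D + E = Y → Y * 2 = 2*G*(2*G-1) → 2*G*(2*G-1) + 2*G = 4*(G*G) →
      24 * B + 12*(G*G) = 12*G + 24*E := by intros; omega
    exact aux (g'+1) _ _ _ _ _ _ q1 q2 gauss1 hgg q3 gauss2 h4
  have keyz := congrArg (Nat.cast : ℕ → ℤ) key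
  push_cast at keyz
  have hgz : 2*((g':ℤ)+1) = ((r:ℤ)-1)*((s:ℤ)-1) := by
    have h := congrArg (Nat.cast : ℕ → ℤ) hg
    rw [Nat.cast_mul, Nat.cast_mul, Nat.cast_sub (show 1 ≤ r by omega),
      Nat.cast_sub (show 1 ≤ s by omega)] at h
    push_cast at h
    linarith
  have hr2 : 1 ≤ r^2 := Nat.one_le_pow _ _ (by omega)
  have hs2 : 1 ≤ s^2 := Nat.one_le_pow _ _ (by omega)
  zify [hr2, hs2]
  push_cast at q4 ⊢
  linear_combination keyz + 2*q4
    + (-6*((g':ℤ)+1) + 6 - 3*((r:ℤ)-1)*((s:ℤ)-1))*hgz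


/-- The size of the Young diagram `Λ` attached to the gap sequence of the
numerical semigroup generated by coprime `r < s` is `(r²-1)(s²-1)/24`. -/
theorem young_diagram_size (r s g : ℕ) (N : ℕ → ℕ)
    (hr : 2 ≤ r) (hrs : r < s) (hco : Nat.Coprime r s)
    (hg : 2 * g = (r - 1) * (s - 1))
    (hmono : StrictMono N)
    (hmem : ∀ n, inSg r s (N n))
    (hsurj : ∀ m, inSg r s m → ∃ n, N n = m) :
    24 * ∑ i ∈ Finset.Icc 1 g, Lam g N i = (r ^ 2 - 1) * (s ^ 2 - 1) :=
  young_diagram_size' r s g N hr hrs hco hg hmono hmem hsurj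
end

section
/- Let g ≥ 1 and let μ = (μ_1 ≥ μ_2 ≥ … ≥ μ_g ≥ 0) be a partition with at most g parts. Then in the polynomial ring ℤ[t_1, …, t_g] one has the flagged Jacobi–Trudi identity det(t_j^{μ_i+g−i})_{1≤i,j≤g} = (∏_{1≤i<j≤g}(t_i − t_j)) · det(h_{μ_i+j−i}^{⟨j,g⟩})_{1≤i,j≤g}, where the (i,j) entry of the second determinant is the complete homogeneous symmetric polynomial of degree μ_i + j − i in the variables t_j, t_{j+1}, …, t_g. -/
open Finset MvPolynomial



/-- `hpoly R a b n` is the complete homogeneous symmetric polynomial of degree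
`n` in the variables `t_a, …, t_b` (the sum of all monomials of total degree
`n` in these variables), with `hpoly R a b n = 0` for `n < 0`. -/
noncomputable def hpoly (R : Type*) [CommRing R] (a b : ℕ) (n : ℤ) :
    MvPolynomial ℕ R :=
  if 0 ≤ n then
    ∑ d ∈ (Finset.Icc a b).sym n.toNat, (Multiset.map MvPolynomial.X d.1).prod
  else 0

section Aux

variable {R : Type*} [CommRing R]

lemma hpoly_neg (a b : ℕ) {n : ℤ} (hn : n < 0) : hpoly R a b n = 0 := by
  rw [hpoly, if_neg (by omega)]

lemma hpoly_zero (a b : ℕ) : hpoly R a b 0 = 1 := by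
  rw [hpoly, if_pos le_rfl]
  simp [show ((∅ : Sym ℕ 0) : Multiset ℕ) = 0 from rfl]

lemma hpoly_empty (a b : ℕ) (hab : b < a) {n : ℤ} (hn : n ≠ 0) : hpoly R a b n = 0 := by
  rcases lt_or_gt_of_ne hn with h | h
  · exact hpoly_neg a b h
  · rw [hpoly, if_pos (by omega)]
    obtain ⟨m, hm⟩ : ∃ m, n.toNat = m + 1 := ⟨n.toNat - 1, by omega⟩
    rw [hm, Finset.Icc_eq_empty (by omega), Finset.sym_empty, Finset.sum_empty]

lemma sym_split (s : Finset ℕ) (a : ℕ) (ha : a ∈ s) (m : ℕ) :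
    ∑ d ∈ s.sym (m+1), (Multiset.map (X : ℕ → MvPolynomial ℕ R) d.1).prod
      = (∑ d ∈ (s.erase a).sym (m+1), (Multiset.map X d.1).prod)
        + X a * ∑ d ∈ s.sym m, (Multiset.map X d.1).prod := by
  rw [← Finset.sum_filter_add_sum_filter_not (s.sym (m+1)) (fun d => a ∉ d)]
  congr 1
  · apply Finset.sum_congr _ (fun _ _ => rfl)
    ext d
    simp only [Finset.mem_filter, Finset.mem_sym_iff, Finset.mem_erase]
    constructor
    · rintro ⟨h1, h2⟩ x hx
      exact ⟨fun h => h2 (h ▸ hx), h1 x hx⟩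
    · intro h
      exact ⟨fun x hx => (h x hx).2, fun hx => (h a hx).1 rfl⟩
  · rw [Finset.mul_sum]
    have himg : (s.sym (m+1)).filter (fun d => ¬ a ∉ d)
        = (s.sym m).image (fun d => a ::ₛ d) := by
      ext d
      simp only [Finset.mem_filter, Finset.mem_image, not_not, Finset.mem_sym_iff]
      constructor
      · rintro ⟨h1, h2⟩
        obtain ⟨t, rfl⟩ := Sym.exists_cons_of_mem h2
        exact ⟨t, fun x hx => h1 x (Sym.mem_cons_of_mem hx), rfl⟩
      · rintro ⟨t, ht, rfl⟩
        refine ⟨fun x hx => ?_, Sym.mem_cons_self a t⟩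
        rcases Sym.mem_cons.1 hx with rfl | hx
        · exact ha
        · exact ht x hx
    rw [himg, Finset.sum_image (fun x _ y _ h => (Sym.cons_inj_right a x y).1 h)]
    apply Finset.sum_congr rfl
    intro d _
    simp [Sym.coe_cons, Multiset.map_cons, Multiset.prod_cons]

lemma hpoly_rec (a b : ℕ) (hab : a ≤ b) (n : ℤ) :
    hpoly R a b n = hpoly R (a+1) b n + X a * hpoly R a b (n - 1) := by
  rcases lt_trichotomy n 0 with h | rfl | h
  · rw [hpoly_neg _ _ h, hpoly_neg _ _ h, hpoly_neg _ _ (by omega), mul_zero, add_zero]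
  · rw [hpoly_zero, hpoly_zero, hpoly_neg _ _ (by omega), mul_zero, add_zero]
  · obtain ⟨m, rfl⟩ : ∃ m : ℕ, n = (m : ℤ) + 1 := ⟨(n-1).toNat, by omega⟩
    rw [hpoly, hpoly, hpoly, if_pos (by omega), if_pos (by omega), if_pos (by omega)]
    have h1 : ((m:ℤ)+1).toNat = m + 1 := by omega
    have h2 : ((m:ℤ)+1-1).toNat = m := by omega
    rw [h1, h2]
    have := sym_split (R := R) (Finset.Icc a b) a (by simp [hab]) m
    rwa [show (Finset.Icc a b).erase a = Finset.Icc (a+1) b by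
      rw [Finset.Icc_erase_left, Finset.Icc_add_one_left_eq_Ioc]] at this

lemma key (G j : ℕ) (hjg : j ≤ G + 1) (n : ℕ) :
    ∑ k ∈ Finset.Icc j (G+1),
        (∏ l ∈ Finset.Icc (k+1) (G+1), ((X j : MvPolynomial ℕ ℤ) - X l))
          * hpoly ℤ k (G+1) ((n : ℤ) - (G+1) + k)
      = (X j : MvPolynomial ℕ ℤ) ^ n := by
  induction n with
  | zero =>
    rw [Finset.sum_eq_single_of_mem (G+1) (Finset.mem_Icc.2 ⟨hjg, le_refl _⟩)]
    · rw [Finset.Icc_eq_empty (by omega), Finset.prod_empty, one_mul,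
        show ((0:ℕ):ℤ) - (G+1) + ((G+1:ℕ):ℤ) = 0 by push_cast; ring, hpoly_zero, pow_zero]
    · intro k hk hne
      have hm := Finset.mem_Icc.1 hk
      rw [hpoly_neg _ _ (by omega), mul_zero]
  | succ n ih =>
    have hins : ∀ a : ℕ, a ≤ G + 1 →
        Finset.Icc a (G+1) = insert a (Finset.Icc (a+1) (G+1)) := by
      intro a haG
      ext x
      simp only [Finset.mem_Icc, Finset.mem_insert]
      omega
    have hnotmem : ∀ a : ℕ, a ∉ Finset.Icc (a+1) (G+1) := by
      intro a
      simp only [Finset.mem_Icc]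
      omega
    have step : ∀ k ∈ Finset.Icc j (G+1),
        (∏ l ∈ Finset.Icc (k+1) (G+1), ((X j : MvPolynomial ℕ ℤ) - X l))
            * hpoly ℤ k (G+1) (((n+1:ℕ) : ℤ) - (G+1) + k)
        = (∏ l ∈ Finset.Icc (k+1) (G+1), ((X j : MvPolynomial ℕ ℤ) - X l))
              * hpoly ℤ (k+1) (G+1) (((n+1:ℕ) : ℤ) - (G+1) + k)
          + (∏ l ∈ Finset.Icc (k+1) (G+1), ((X j : MvPolynomial ℕ ℤ) - X l))
              * (X k * hpoly ℤ k (G+1) ((n : ℤ) - (G+1) + k)) := by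
      intro k hk
      rw [hpoly_rec k (G+1) (Finset.mem_Icc.1 hk).2,
        show ((n+1:ℕ):ℤ) - (G+1) + k - 1 = (n:ℤ) - (G+1) + k by push_cast; ring,
        mul_add]
    rw [Finset.sum_congr rfl step, Finset.sum_add_distrib]
    have hT : (∑ k ∈ Finset.Icc j (G+1),
          (∏ l ∈ Finset.Icc (k+1) (G+1), ((X j : MvPolynomial ℕ ℤ) - X l))
            * hpoly ℤ (k+1) (G+1) (((n+1:ℕ):ℤ) - (G+1) + k))
        = ∑ k ∈ Finset.Icc (j+1) (G+1),
            (X j - X k) * ((∏ l ∈ Finset.Icc (k+1) (G+1), ((X j : MvPolynomial ℕ ℤ) - X l))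
              * hpoly ℤ k (G+1) ((n:ℤ) - (G+1) + k)) := by
      rw [Finset.sum_Icc_succ_top hjg,
        Finset.Icc_eq_empty (show ¬ (G+1+1 ≤ G+1) by omega), Finset.prod_empty, one_mul,
        hpoly_empty (G+1+1) (G+1) (by omega)
          (show ((n+1:ℕ):ℤ) - (G+1) + ((G+1:ℕ):ℤ) ≠ 0 by push_cast; omega), add_zero]
      refine Finset.sum_nbij' (fun k => k + 1) (fun k => k - 1) ?_ ?_ ?_ ?_ ?_
      · intro a haa
        have := Finset.mem_Icc.1 haa
        exact Finset.mem_Icc.2 (by omega)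
      · intro a haa
        have := Finset.mem_Icc.1 haa
        exact Finset.mem_Icc.2 (by omega)
      · intro a _
        omega
      · intro a haa
        have := Finset.mem_Icc.1 haa
        omega
      · intro k hk
        have hkG : k ≤ G := (Finset.mem_Icc.1 hk).2
        rw [hins (k+1) (by omega), Finset.prod_insert (hnotmem (k+1)),
          show ((n+1:ℕ):ℤ) - (G+1) + (k:ℤ) = (n:ℤ) - (G+1) + ((k:ℤ)+1) by push_cast; ring]
        push_cast
        ring
    rw [hT, hins j hjg, Finset.sum_insert (hnotmem j), add_left_comm,
      ← Finset.sum_add_distrib]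
    have hcomb : ∀ k ∈ Finset.Icc (j+1) (G+1),
        (X j - X k) * ((∏ l ∈ Finset.Icc (k+1) (G+1), ((X j : MvPolynomial ℕ ℤ) - X l))
              * hpoly ℤ k (G+1) ((n:ℤ) - (G+1) + k))
          + (∏ l ∈ Finset.Icc (k+1) (G+1), ((X j : MvPolynomial ℕ ℤ) - X l))
              * (X k * hpoly ℤ k (G+1) ((n:ℤ) - (G+1) + k))
        = X j * ((∏ l ∈ Finset.Icc (k+1) (G+1), ((X j : MvPolynomial ℕ ℤ) - X l))
              * hpoly ℤ k (G+1) ((n:ℤ) - (G+1) + k)) := by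
      intro k _
      ring
    rw [Finset.sum_congr rfl hcomb, ← Finset.mul_sum]
    have := ih
    rw [hins j hjg, Finset.sum_insert (hnotmem j)] at this
    calc (∏ l ∈ Finset.Icc (j+1) (G+1), ((X j : MvPolynomial ℕ ℤ) - X l))
            * (X j * hpoly ℤ j (G+1) ((n:ℤ) - (G+1) + j))
          + X j * ∑ k ∈ Finset.Icc (j+1) (G+1),
              (∏ l ∈ Finset.Icc (k+1) (G+1), ((X j : MvPolynomial ℕ ℤ) - X l))
                * hpoly ℤ k (G+1) ((n:ℤ) - (G+1) + k)
        = X j * ((∏ l ∈ Finset.Icc (j+1) (G+1), ((X j : MvPolynomial ℕ ℤ) - X l))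
              * hpoly ℤ j (G+1) ((n:ℤ) - (G+1) + j)
            + ∑ k ∈ Finset.Icc (j+1) (G+1),
              (∏ l ∈ Finset.Icc (k+1) (G+1), ((X j : MvPolynomial ℕ ℤ) - X l))
                * hpoly ℤ k (G+1) ((n:ℤ) - (G+1) + k)) := by ring
      _ = X j * X j ^ n := by rw [this]
      _ = X j ^ (n+1) := by ring


end Aux

/-- Flagged Jacobi–Trudi identity: for a partition `μ` with at most `g` parts,
`det(t_j^{μ_i+g-i}) = (∏_{i<j}(t_i - t_j)) · det(h_{μ_i+j-i}^⟨j,g⟩)`, where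
the `(i,j)` entry of the second determinant is the complete homogeneous
symmetric polynomial of degree `μ_i + j - i` in the variables `t_j, …, t_g`. -/
theorem flagged_jacobi_trudi (g : ℕ) (hg : 1 ≤ g) (μ : ℕ → ℕ)
    (hmono : ∀ i j : ℕ, 1 ≤ i → i ≤ j → j ≤ g → μ j ≤ μ i) :
    Matrix.det (Matrix.of fun i j : Fin g =>
        (MvPolynomial.X (j.val + 1) : MvPolynomial ℕ ℤ)
          ^ (μ (i.val + 1) + g - (i.val + 1)))
      = (∏ j ∈ Finset.Icc 1 g, ∏ i ∈ Finset.Ico 1 j,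
            (MvPolynomial.X i - MvPolynomial.X j)) *
        Matrix.det (Matrix.of fun i j : Fin g =>
          hpoly ℤ (j.val + 1) g
            ((μ (i.val + 1) : ℤ) + (j.val + 1) - (i.val + 1))) := by
  obtain ⟨G, rfl⟩ : ∃ G, g = G + 1 := ⟨g - 1, by omega⟩
  set A : Matrix (Fin (G+1)) (Fin (G+1)) (MvPolynomial ℕ ℤ) :=
    Matrix.of fun i j : Fin (G+1) =>
      hpoly ℤ (j.val + 1) (G+1) ((μ (i.val + 1) : ℤ) + (j.val + 1) - (i.val + 1)) with hA
  set B : Matrix (Fin (G+1)) (Fin (G+1)) (MvPolynomial ℕ ℤ) :=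
    Matrix.of fun k j : Fin (G+1) => if j.val ≤ k.val then
      ∏ l ∈ Finset.Icc (k.val+2) (G+1), (X (j.val+1) - X l) else 0 with hB
  have hAB : (Matrix.of fun i j : Fin (G+1) =>
      (MvPolynomial.X (j.val + 1) : MvPolynomial ℕ ℤ)
        ^ (μ (i.val + 1) + (G+1) - (i.val + 1))) = A * B := by
    refine Matrix.ext fun i j => ?_
    rw [Matrix.mul_apply]
    set n : ℕ := μ (i.val + 1) + (G+1) - (i.val + 1) with hn
    have hiv : i.val + 1 ≤ G + 1 := by omega
    have hnz : (n : ℤ) = (μ (i.val+1) : ℤ) + (G+1) - (i.val+1) := by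
      rw [hn]; omega
    have hkey := key G (j.val + 1) (by omega) n
    calc (Matrix.of fun i j : Fin (G+1) =>
          (MvPolynomial.X (j.val + 1) : MvPolynomial ℕ ℤ)
            ^ (μ (i.val + 1) + (G+1) - (i.val + 1))) i j
        = X (j.val + 1) ^ n := rfl
      _ = ∑ k ∈ Finset.Icc (j.val + 1) (G+1),
            (∏ l ∈ Finset.Icc (k+1) (G+1), ((X (j.val+1) : MvPolynomial ℕ ℤ) - X l))
              * hpoly ℤ k (G+1) ((n : ℤ) - (G+1) + k) := hkey.symm
      _ = ∑ k ∈ Finset.range (G+1), (if j.val ≤ k then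
            hpoly ℤ (k + 1) (G+1) ((μ (i.val + 1) : ℤ) + (k + 1) - (i.val + 1))
              * ∏ l ∈ Finset.Icc (k+2) (G+1), ((X (j.val+1) : MvPolynomial ℕ ℤ) - X l)
            else 0) := by
          rw [← Finset.sum_filter]
          rw [show Finset.filter (fun k => j.val ≤ k) (Finset.range (G+1))
              = Finset.Ico j.val (G+1) by
            ext x; simp only [Finset.mem_filter, Finset.mem_range, Finset.mem_Ico]; omega]
          refine Finset.sum_nbij' (fun k => k - 1) (fun k => k + 1) ?_ ?_ ?_ ?_ ?_
          · intro a haa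
            have := Finset.mem_Icc.1 haa
            exact Finset.mem_Ico.2 (by omega)
          · intro a haa
            have := Finset.mem_Ico.1 haa
            exact Finset.mem_Icc.2 (by omega)
          · intro a haa
            have := Finset.mem_Icc.1 haa
            omega
          · intro a haa
            omega
          · intro k hk
            have hm := Finset.mem_Icc.1 hk
            rw [show k - 1 + 1 = k by omega, show k - 1 + 2 = k + 1 by omega,
              show ((k - 1 : ℕ) : ℤ) = (k : ℤ) - 1 by omega,
              show (n : ℤ) - (G+1) + k
                = (μ (i.val+1) : ℤ) + ((k:ℤ) - 1 + 1) - (i.val+1) by rw [hnz]; ring]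
            ring
      _ = ∑ k : Fin (G+1), A i k * B k j := by
          rw [← Fin.sum_univ_eq_sum_range (fun k => if j.val ≤ k then
            hpoly ℤ (k + 1) (G+1) ((μ (i.val + 1) : ℤ) + (k + 1) - (i.val + 1))
              * ∏ l ∈ Finset.Icc (k+2) (G+1), ((X (j.val+1) : MvPolynomial ℕ ℤ) - X l)
            else 0) (G+1)]
          refine Finset.sum_congr rfl fun k _ => ?_
          rw [hA, hB]
          simp only [Matrix.of_apply, mul_ite, mul_zero]
  have hBT : B.BlockTriangular OrderDual.toDual := by
    intro a b hab
    have h2 : a < b := hab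
    rw [hB]
    simp only [Matrix.of_apply]
    exact if_neg (Nat.not_le.2 (Fin.lt_def.1 h2))
  have hdetB : B.det = ∏ k : Fin (G+1),
      ∏ l ∈ Finset.Icc (k.val+2) (G+1), ((X (k.val+1) : MvPolynomial ℕ ℤ) - X l) := by
    rw [Matrix.det_of_lowerTriangular B hBT]
    refine Finset.prod_congr rfl fun k _ => ?_
    rw [hB]
    simp only [Matrix.of_apply, if_pos (le_refl _)]
  have hV : (∏ j ∈ Finset.Icc 1 (G+1), ∏ i ∈ Finset.Ico 1 j,
        ((MvPolynomial.X i : MvPolynomial ℕ ℤ) - MvPolynomial.X j)) = B.det := by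
    rw [hdetB]
    rw [Finset.prod_comm' (t' := Finset.Icc 1 (G+1))
      (s' := fun i => Finset.Icc (i+1) (G+1))
      (fun x y => by simp only [Finset.mem_Icc, Finset.mem_Ico]; omega)]
    rw [Fin.prod_univ_eq_prod_range (fun k =>
      ∏ l ∈ Finset.Icc (k+2) (G+1), ((X (k+1) : MvPolynomial ℕ ℤ) - X l)) (G+1)]
    refine Finset.prod_nbij' (fun k => k - 1) (fun k => k + 1) ?_ ?_ ?_ ?_ ?_
    · intro a haa
      have := Finset.mem_Icc.1 haa
      exact Finset.mem_range.2 (by omega)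
    · intro a haa
      have := Finset.mem_range.1 haa
      exact Finset.mem_Icc.2 (by omega)
    · intro a haa
      have := Finset.mem_Icc.1 haa
      omega
    · intro a haa
      omega
    · intro y hy
      have hm := Finset.mem_Icc.1 hy
      rw [show y - 1 + 2 = y + 1 by omega, show y - 1 + 1 = y by omega]
  rw [hAB, Matrix.det_mul, hV, hA]
  ring
end

section
/- Let r and s be coprime integers with 2 ≤ r < s, g = (r−1)(s−1)/2, N the increasing enumeration of the numerical semigroup generated by r and s, and Λ_i = g − N(i−1) + (i−1) for i = 1, …, g. Then for every k with 0 ≤ k < g, the rank of the truncated partition Λ^{[k]} = (Λ_{k+1}, …, Λ_g) equals n_k = #{ℓ ∈ ℕ : N(ℓ) ≤ g−k−1}; that is, n_k is the largest integer ρ such that Λ_{k+ρ} ≥ ρ. -/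
/-- `nkDef g k N = #{ℓ : N ℓ ≤ g - k - 1}`. -/
noncomputable def nkDef (g k : ℕ) (N : ℕ → ℕ) : ℕ :=
  Set.ncard {ℓ : ℕ | N ℓ ≤ g - k - 1}

/-!
Write `S = ⟨r, s⟩` and `c x = #(S ∩ [0, x))`. As `N` enumerates `S`, `N ℓ < x ↔ ℓ < c x`, so
`n_k = c (g - k)`. Since `2g - 1 = rs - r - s`, the reflection `m ↦ 2g - 1 - m` exchanges `S` and its
complement: writing `m = a r + b s` with `0 ≤ a < s`, one has `m ∈ S ↔ 0 ≤ b`, and the reflection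
sends `(a, b)` to `(s - 1 - a, -1 - b)`. Hence every window `[g - k, g + k)` holds exactly `k`
elements of `S`, i.e. `c (g + k) = n_k + k ≤ c (2g) = g`. Finally `Λ_{k+ρ} ≥ ρ` iff
`N (k + ρ - 1) < g + k` iff `k + ρ - 1 < n_k + k` iff `ρ ≤ n_k`.
-/

open Finset Nat

theorem exists_eq_mul_add_mul_of_coprime {r s : ℕ} (hco : r.Coprime s) (hs : 0 < s) (z : ℤ) :
    ∃ a b : ℤ, 0 ≤ a ∧ a < s ∧ z = a * r + b * s := by
  obtain ⟨u, v, huv⟩ := Nat.isCoprime_iff_coprime.mpr hco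
  have hs' : (0 : ℤ) < s := mod_cast hs
  refine ⟨z * u % s, z * u / s * r + z * v, Int.emod_nonneg _ hs'.ne', Int.emod_lt_of_pos _ hs', ?_⟩
  linear_combination (-z) * huv - (r : ℤ) * Int.emod_add_mul_ediv (z * u) s

theorem inSg_iff_nonneg {r s : ℕ} (hco : r.Coprime s) {a b : ℤ} (ha : 0 ≤ a) (has : a < s)
    {n : ℕ} (hn : (n : ℤ) = a * r + b * s) : inSg r s n ↔ 0 ≤ b := by
  constructor
  · rintro ⟨a', b', rfl⟩
    push_cast at hn
    obtain ⟨t, ht⟩ : (s : ℤ) ∣ a' - a :=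
      (Nat.isCoprime_iff_coprime.mpr hco).symm.dvd_of_dvd_mul_right ⟨b - b', by linarith⟩
    have ht0 : 0 ≤ t := by nlinarith
    have hb : b * s = (b' + t * r) * s := by linear_combination hn.symm + (r : ℤ) * ht
    have hs : (s : ℤ) ≠ 0 := by omega
    rw [mul_right_cancel₀ hs hb]
    positivity
  · intro hb
    refine ⟨a.toNat, b.toNat, ?_⟩
    zify
    rw [Int.toNat_of_nonneg ha, Int.toNat_of_nonneg hb, hn]

theorem inSg_iff_not_inSg {r s m n : ℕ} (hco : r.Coprime s) (h : m + n + r + s = r * s) :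
    inSg r s m ↔ ¬ inSg r s n := by
  have hs : 0 < s := Nat.pos_of_ne_zero (by rintro rfl; simp_all)
  obtain ⟨a, b, ha, has, hm⟩ := exists_eq_mul_add_mul_of_coprime hco hs m
  have hn : (n : ℤ) = (s - 1 - a) * r + (-1 - b) * s := by
    linear_combination (mod_cast h : (m + n + r + s : ℤ) = r * s) - hm
  rw [inSg_iff_nonneg hco ha has hm, inSg_iff_nonneg hco (by omega) (by omega) hn]
  omega

theorem add_add_eq_mul_of_two_mul_eq {r s g m n : ℕ} (hg : 2 * g = (r - 1) * (s - 1))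
    (hmn : m + n + 1 = 2 * g) : m + n + r + s = r * s := by
  rcases r with _ | r <;> rcases s with _ | s <;>
    simp only [zero_tsub, Nat.add_sub_cancel, zero_mul, mul_zero] at hg <;> nlinarith

theorem count_two_mul_of_iff_not {q : ℕ → Prop} [DecidablePred q] {k : ℕ}
    (hq : ∀ i j, i + j + 1 = 2 * k → (q i ↔ ¬ q j)) : count q (2 * k) = k := by
  have hreflect : #{i ∈ range (2 * k) | q i} = #{i ∈ range (2 * k) | ¬ q i} := by
    refine card_nbij' (fun i => 2 * k - 1 - i) (fun i => 2 * k - 1 - i) ?_ ?_ ?_ ?_ <;>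
      intro i hi <;> simp only [coe_filter, Set.mem_ofPred_eq, mem_range] at hi ⊢
    · exact ⟨by omega, (hq i _ (by omega)).mp hi.2⟩
    · exact ⟨by omega, (hq _ i (by omega)).mpr hi.2⟩
    all_goals omega
  have hsplit := card_filter_add_card_filter_not (s := range (2 * k)) (fun i => q i)
  rw [card_range, ← hreflect] at hsplit
  rw [count_eq_card_filter_range]
  omega

theorem count_add_eq_count_sub_add {p : ℕ → Prop} [DecidablePred p] {g k : ℕ}
    (hp : ∀ m n, m + n + 1 = 2 * g → (p m ↔ ¬ p n)) (hk : k ≤ g) :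
    count p (g + k) = count p (g - k) + k := by
  rw [show g + k = g - k + 2 * k by omega, count_add,
    count_two_mul_of_iff_not fun i j hij => hp _ _ (by omega)]

theorem eq_nth_of_strictMono {p : ℕ → Prop} {N : ℕ → ℕ} (hmono : StrictMono N)
    (hmem : ∀ n, p (N n)) (hsurj : ∀ m, p m → ∃ n, N n = m) : N = nth p := by
  have hinf : (Set.ofPred p).Infinite := Set.infinite_of_injective_forall_mem hmono.injective hmem
  funext n
  refine eq_nth_of_strictMonoOn_of_mapsTo_of_surjOn N (fun m hm => ?_) (fun n _ => hmem n)
    (hmono.strictMonoOn _) fun hf => (hinf hf).elim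
  obtain ⟨n, rfl⟩ := hsurj m hm
  exact ⟨n, fun hf => (hinf hf).elim, rfl⟩

theorem lt_iff_lt_count_of_strictMono {p : ℕ → Prop} [DecidablePred p] {N : ℕ → ℕ}
    (hmono : StrictMono N) (hmem : ∀ n, p (N n)) (hsurj : ∀ m, p m → ∃ n, N n = m) (ℓ x : ℕ) :
    N ℓ < x ↔ ℓ < count p x := by
  rw [eq_nth_of_strictMono hmono hmem hsurj,
    lt_nth_iff_count_lt (Set.infinite_of_injective_forall_mem hmono.injective hmem)]

theorem rank_of_truncated_partition_general (r s g : ℕ) (N : ℕ → ℕ)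
    (hco : Nat.Coprime r s)
    (hg : 2 * g = (r - 1) * (s - 1))
    (hmono : StrictMono N)
    (hmem : ∀ n, inSg r s (N n))
    (hsurj : ∀ m, inSg r s m → ∃ n, N n = m)
    (k : ℕ) (hk : k < g) :
    (1 ≤ nkDef g k N ∧ k + nkDef g k N ≤ g ∧
      nkDef g k N ≤ Lam g N (k + nkDef g k N)) ∧
    (∀ ρ : ℕ, 1 ≤ ρ → k + ρ ≤ g → ρ ≤ Lam g N (k + ρ) → ρ ≤ nkDef g k N) := by
  classical
  have hsym (m n : ℕ) (h : m + n + 1 = 2 * g) : inSg r s m ↔ ¬ inSg r s n :=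
    inSg_iff_not_inSg hco (add_add_eq_mul_of_two_mul_eq hg h)
  have hlt := lt_iff_lt_count_of_strictMono hmono hmem hsurj
  have hnk : nkDef g k N = count (inSg r s) (g - k) := by
    rw [nkDef, ← Set.ncard_Iio_nat (count _ _)]
    congr 1
    ext ℓ
    simp only [Set.mem_ofPred_eq, Set.mem_Iio, ← hlt]
    omega
  have hpos : count (inSg r s) (g - k) ≠ 0 :=
    count_ne_iff_exists.mpr ⟨0, by omega, 0, 0, by simp⟩
  have hwindow := count_add_eq_count_sub_add hsym hk.le
  have htotal : count (inSg r s) (g + g) = g := by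
    simpa using count_add_eq_count_sub_add hsym le_rfl
  have hcount_le := count_monotone (inSg r s) (show g + k ≤ g + g by omega)
  rw [hnk]
  refine ⟨⟨by omega, by omega, ?_⟩, fun ρ hρ _ hρΛ => ?_⟩
  · have := (hlt (k + count (inSg r s) (g - k) - 1) (g + k)).mpr (by omega)
    simp only [Lam]
    omega
  · have := (hlt (k + ρ - 1) (g + k)).mp (by simp only [Lam] at hρΛ; omega)
    omega

/-- The rank of the truncated partition `Λ^{[k]} = (Λ_{k+1}, …, Λ_g)` equals
`n_k`: `n_k` is the largest `ρ` with `Λ_{k+ρ} ≥ ρ` (parts beyond the `g`-th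
being zero). -/
theorem rank_of_truncated_partition (r s g : ℕ) (N : ℕ → ℕ)
    (hr : 2 ≤ r) (hrs : r < s) (hco : Nat.Coprime r s)
    (hg : 2 * g = (r - 1) * (s - 1))
    (hmono : StrictMono N)
    (hmem : ∀ n, inSg r s (N n))
    (hsurj : ∀ m, inSg r s m → ∃ n, N n = m)
    (k : ℕ) (hk : k < g) :
    (1 ≤ nkDef g k N ∧ k + nkDef g k N ≤ g ∧
      nkDef g k N ≤ Lam g N (k + nkDef g k N)) ∧
    (∀ ρ : ℕ, 1 ≤ ρ → k + ρ ≤ g → ρ ≤ Lam g N (k + ρ) → ρ ≤ nkDef g k N) :=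
  rank_of_truncated_partition_general r s g N hco hg hmono hmem hsurj k hk
end

section
/- Let r and s be coprime integers with 2 ≤ r < s, g = (r−1)(s−1)/2, N the increasing enumeration of the numerical semigroup generated by r and s, and Λ_i = g − N(i−1) + (i−1) for i = 1, …, g. Then for every k with g−r ≤ k ≤ g−1 one has n_k = 1 and N_k = Λ_{k+1} + g − (k+1), where n_k = #{ℓ ∈ ℕ : N(ℓ) ≤ g−k−1} and N_k = Σ_{i=k+1}^{g} Λ_i. -/
section Aux

lemma inSg_zero (r s : ℕ) : inSg r s 0 := ⟨0, 0, by simp⟩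

lemma inSg_ge {r s : ℕ} (hrs : r ≤ s) {m : ℕ} (h : inSg r s m) (h0 : m ≠ 0) : r ≤ m := by
  obtain ⟨a, b, rfl⟩ := h
  rcases Nat.eq_zero_or_pos a with ha | ha
  · rcases Nat.eq_zero_or_pos b with hb | hb
    · subst ha; subst hb; simp at h0
    · calc r ≤ s := hrs
        _ ≤ b * s := Nat.le_mul_of_pos_left s hb
        _ ≤ a * r + b * s := Nat.le_add_left _ _
  · calc r ≤ a * r := Nat.le_mul_of_pos_left r ha
      _ ≤ a * r + b * s := Nat.le_add_right _ _

/-- No two elements of the semigroup sum to the Frobenius number `F = rs - r - s`. -/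
lemma not_add_eq_F {r s F : ℕ} (hr : 2 ≤ r) (hrs : r < s) (hco : Nat.Coprime r s)
    (hF : r * s = F + r + s)
    {m n : ℕ} (hm : inSg r s m) (hn : inSg r s n) : m + n ≠ F := by
  obtain ⟨a, b, rfl⟩ := hm
  obtain ⟨c, d, rfl⟩ := hn
  intro h
  have h1 : (a + c + 1) * r + (b + d + 1) * s = r * s := by
    have hex : (a + c + 1) * r + (b + d + 1) * s
        = (a * r + b * s) + (c * r + d * s) + (r + s) := by ring
    omega
  have hrd : r ∣ (b + d + 1) := by
    refine hco.dvd_of_dvd_mul_right ?_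
    have he : (b + d + 1) * s = r * s - (a + c + 1) * r := by omega
    rw [he]
    exact Nat.dvd_sub (dvd_mul_right r s) (dvd_mul_left r (a + c + 1))
  have hsd : s ∣ (a + c + 1) := by
    refine hco.symm.dvd_of_dvd_mul_right ?_
    have he : (a + c + 1) * r = r * s - (b + d + 1) * s := by omega
    rw [he]
    exact Nat.dvd_sub (dvd_mul_left s r) (dvd_mul_left s (b + d + 1))
  have h3 : r ≤ b + d + 1 := Nat.le_of_dvd (by omega) hrd
  have h4 : s ≤ a + c + 1 := Nat.le_of_dvd (by omega) hsd
  have h5 : s * r ≤ (a + c + 1) * r := Nat.mul_le_mul_right r h4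
  have h6 : r * s ≤ (b + d + 1) * s := Nat.mul_le_mul_right s h3
  have h7 : s * r = r * s := Nat.mul_comm s r
  have h8 : 0 < r * s := Nat.mul_pos (by omega) (by omega)
  omega

/-- Symmetry: if `m ≤ F` is not in the semigroup, then `F - m` is. -/
lemma sym_mem {r s F : ℕ} (hr : 2 ≤ r) (hrs : r < s) (hco : Nat.Coprime r s)
    (hF : r * s = F + r + s) {m : ℕ} (hm : m ≤ F) (hnot : ¬ inSg r s m) :
    inSg r s (F - m) := by
  haveI : NeZero r := ⟨by omega⟩
  have hu : IsUnit (s : ZMod r) := (ZMod.isUnit_iff_coprime s r).mpr hco.symm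
  set b : ℕ := ((m : ZMod r) * (s : ZMod r)⁻¹).val with hbdef
  have hb : b < r := ZMod.val_lt _
  have hbs : b * s ≡ m [MOD r] := by
    refine (ZMod.natCast_eq_natCast_iff _ _ _).mp ?_
    push_cast
    rw [hbdef, ZMod.natCast_val, ZMod.cast_id, mul_assoc, ZMod.inv_mul_of_unit _ hu, mul_one]
  rcases le_or_gt (b * s) m with hle | hgt
  · exfalso
    obtain ⟨a, ha⟩ := (Nat.modEq_iff_dvd' hle).mp hbs
    exact hnot ⟨a, b, by rw [Nat.mul_comm r a] at ha; omega⟩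
  · obtain ⟨q, hq⟩ := (Nat.modEq_iff_dvd' hgt.le).mp hbs.symm
    have hq1 : 1 ≤ q := by
      rcases Nat.eq_zero_or_pos q with h0 | h0
      · exfalso; rw [h0, Nat.mul_zero] at hq; omega
      · exact h0
    refine ⟨q - 1, r - 1 - b, ?_⟩
    have hsplit : (r - 1 - b) * s + (b + 1) * s = r * s := by
      rw [← Nat.add_mul]
      congr 1
      omega
    have hb1 : (b + 1) * s = b * s + s := by ring
    have hqq : r * q = r * (q - 1) + r := by
      have : q - 1 + 1 = q := by omega
      calc r * q = r * (q - 1 + 1) := by rw [this]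
        _ = r * (q - 1) + r := by ring
    have hcm : (q - 1) * r = r * (q - 1) := Nat.mul_comm _ _
    omega

end Aux

open Classical in
/-- There are exactly `g` semigroup elements below `2g`. -/
lemma card_semigroup {r s g : ℕ} (hr : 2 ≤ r) (hrs : r < s) (hco : Nat.Coprime r s)
    (hF : r * s = (2 * g - 1) + r + s) (hg1 : 1 ≤ g) :
    ((Finset.range (2 * g)).filter (inSg r s)).card = g := by
  have htot := Finset.card_filter_add_card_filter_not
    (s := Finset.range (2 * g)) (p := inSg r s)
  rw [Finset.card_range] at htot
  have hbij : ((Finset.range (2 * g)).filter (inSg r s)).card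
      = ((Finset.range (2 * g)).filter (fun a => ¬ inSg r s a)).card := by
    refine Finset.card_bij' (fun m _ => 2 * g - 1 - m) (fun m _ => 2 * g - 1 - m)
      ?_ ?_ ?_ ?_
    · intro a ha
      rw [Finset.mem_filter, Finset.mem_range] at ha
      simp only [Finset.mem_filter, Finset.mem_range]
      refine ⟨by omega, fun hcon => ?_⟩
      exact not_add_eq_F hr hrs hco hF ha.2 hcon (by omega)
    · intro a ha
      rw [Finset.mem_filter, Finset.mem_range] at ha
      simp only [Finset.mem_filter, Finset.mem_range]
      refine ⟨by omega, ?_⟩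
      exact sym_mem hr hrs hco hF (by omega) ha.2
    · intro a ha
      rw [Finset.mem_filter, Finset.mem_range] at ha
      omega
    · intro a ha
      rw [Finset.mem_filter, Finset.mem_range] at ha
      omega
  omega

/-- For `g - r ≤ k ≤ g - 1` one has `n_k = 1` and
`N_k = Σ_{i=k+1}^g Λ_i = Λ_{k+1} + g - (k+1)`. -/
theorem top_strata (r s g : ℕ) (N : ℕ → ℕ)
    (hr : 2 ≤ r) (hrs : r < s) (hco : Nat.Coprime r s)
    (hg : 2 * g = (r - 1) * (s - 1))
    (hmono : StrictMono N)
    (hmem : ∀ n, inSg r s (N n))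
    (hsurj : ∀ m, inSg r s m → ∃ n, N n = m)
    (k : ℕ) (hk1 : g - r ≤ k) (hk2 : k ≤ g - 1) :
    nkDef g k N = 1 ∧
    ∑ i ∈ Finset.Icc (k + 1) g, Lam g N i = Lam g N (k + 1) + g - (k + 1) := by
  classical
  -- basic facts
  have hkey : (r - 1) * (s - 1) + r + s = r * s + 1 := by
    obtain ⟨a, rfl⟩ : ∃ a, r = a + 1 := ⟨r - 1, by omega⟩
    obtain ⟨b, rfl⟩ : ∃ b, s = b + 1 := ⟨s - 1, by omega⟩
    simp only [Nat.add_sub_cancel]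
    ring
  have hg1 : 1 ≤ g := by
    have h2 : 1 * 2 ≤ (r - 1) * (s - 1) := Nat.mul_le_mul (by omega) (by omega)
    omega
  have hF : r * s = (2 * g - 1) + r + s := by omega
  have N0 : N 0 = 0 := by
    obtain ⟨n, hn⟩ := hsurj 0 (inSg_zero r s)
    cases n with
    | zero => exact hn
    | succ m =>
        have := hmono (Nat.succ_pos m)
        rw [hn] at this
        exact absurd this (Nat.not_lt_zero _)
  have hgap : ∀ t : ℕ, 0 < t → t < r → ¬ inSg r s t := by
    intro t ht htr hcon
    have := inSg_ge hrs.le hcon (by omega)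
    omega
  -- the set of semigroup elements below 2g
  set P : Finset ℕ := (Finset.range (2 * g)).filter (inSg r s) with hPdef
  have hcard : P.card = g := card_semigroup hr hrs hco hF hg1
  have hsub : ∀ n < g, N n < 2 * g := by
    intro n hn
    by_contra hcon
    push_neg at hcon
    have hPs : P ⊆ Finset.image N (Finset.range n) := by
      intro t ht
      rw [hPdef, Finset.mem_filter, Finset.mem_range] at ht
      obtain ⟨i, hi⟩ := hsurj t ht.2
      have hilt : i < n := by
        by_contra hi2
        push_neg at hi2
        have := hmono.monotone hi2
        omega
      exact Finset.mem_image.mpr ⟨i, Finset.mem_range.mpr hilt, hi⟩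
    have h1 := Finset.card_le_card hPs
    have h2 := Finset.card_image_le (f := N) (s := Finset.range n)
    rw [Finset.card_range] at h2
    omega
  have himg : Finset.image N (Finset.range g) = P := by
    refine Finset.eq_of_subset_of_card_le ?_ ?_
    · intro t ht
      obtain ⟨i, hi, rfl⟩ := Finset.mem_image.mp ht
      rw [Finset.mem_range] at hi
      rw [hPdef, Finset.mem_filter, Finset.mem_range]
      exact ⟨hsub i hi, hmem i⟩
    · rw [hcard, Finset.card_image_of_injective _ hmono.injective, Finset.card_range]
  have hmemP : ∀ t, t ∈ P ↔ ∃ i < g, N i = t := by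
    intro t
    rw [← himg, Finset.mem_image]
    constructor
    · rintro ⟨i, hi, rfl⟩; exact ⟨i, Finset.mem_range.mp hi, rfl⟩
    · rintro ⟨i, hi, rfl⟩; exact ⟨i, Finset.mem_range.mpr hi, rfl⟩
  have hFnot : ¬ inSg r s (2 * g - 1) := by
    intro h
    exact not_add_eq_F hr hrs hco hF h (inSg_zero r s) (by omega)
  -- the key computation of N near the top
  have key : ∀ j : ℕ, j + 2 ≤ r → j + 2 ≤ g → N (g - 1 - j) = 2 * g - 2 - j := by
    intro j
    induction j with
    | zero =>
      intro hjr hjg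
      simp only [Nat.sub_zero]
      have hmem1 : inSg r s (2 * g - 2) := by
        have := sym_mem hr hrs hco hF (m := 1) (by omega) (hgap 1 one_pos (by omega))
        have he : 2 * g - 1 - 1 = 2 * g - 2 := by omega
        rwa [he] at this
      obtain ⟨i, hi, hNi⟩ := (hmemP (2 * g - 2)).mp
        (by rw [hPdef, Finset.mem_filter, Finset.mem_range]; exact ⟨by omega, hmem1⟩)
      have hlow : 2 * g - 2 ≤ N (g - 1) := by
        have := hmono.monotone (show i ≤ g - 1 by omega)
        omega
      have hNg1 : N (g - 1) ∈ P := (hmemP _).mpr ⟨g - 1, by omega, rfl⟩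
      rw [hPdef, Finset.mem_filter, Finset.mem_range] at hNg1
      have hne : N (g - 1) ≠ 2 * g - 1 := by
        intro h; rw [h] at hNg1; exact hFnot hNg1.2
      omega
    | succ j ih =>
      intro hjr hjg
      have hNj := ih (by omega) (by omega)
      have hmem2 : inSg r s (2 * g - 3 - j) := by
        have := sym_mem hr hrs hco hF (m := j + 2) (by omega)
          (hgap (j + 2) (by omega) (by omega))
        have he : 2 * g - 1 - (j + 2) = 2 * g - 3 - j := by omega
        rwa [he] at this
      obtain ⟨i, hi, hNi⟩ := (hmemP (2 * g - 3 - j)).mp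
        (by rw [hPdef, Finset.mem_filter, Finset.mem_range]; exact ⟨by omega, hmem2⟩)
      have hilt : i < g - 1 - j := by
        rw [← hmono.lt_iff_lt, hNj, hNi]
        omega
      have hlow : 2 * g - 3 - j ≤ N (g - 2 - j) := by
        have := hmono.monotone (show i ≤ g - 2 - j by omega)
        omega
      have hup : N (g - 2 - j) < 2 * g - 2 - j := by
        have := hmono (show g - 2 - j < g - 1 - j by omega)
        omega
      have e1 : g - 1 - (j + 1) = g - 2 - j := by omega
      have e2 : 2 * g - 2 - (j + 1) = 2 * g - 3 - j := by omega
      rw [e1, e2]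
      omega
  constructor
  · -- n_k = 1
    have hset : {ℓ : ℕ | N ℓ ≤ g - k - 1} = {0} := by
      ext ℓ
      simp only [Set.mem_setOf_eq, Set.mem_singleton_iff]
      constructor
      · intro hℓ
        by_contra h
        have hpos : 0 < ℓ := Nat.pos_of_ne_zero h
        have h1 : N 0 < N ℓ := hmono hpos
        rw [N0] at h1
        have h2 : r ≤ N ℓ := inSg_ge hrs.le (hmem ℓ) (by omega)
        omega
      · rintro rfl
        rw [N0]
        exact Nat.zero_le _
    rw [nkDef, hset, Set.ncard_singleton]
  · -- the sum
    have hk1g : k + 1 ≤ g := by omega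
    have hLam1 : ∀ i ∈ Finset.Icc (k + 2) g, Lam g N i = 1 := by
      intro i hi
      rw [Finset.mem_Icc] at hi
      have hj := key (g - 1 - (i - 1)) (by omega) (by omega)
      have e1 : g - 1 - (g - 1 - (i - 1)) = i - 1 := by omega
      have e2 : 2 * g - 2 - (g - 1 - (i - 1)) = g + (i - 1) - 1 := by omega
      rw [e1, e2] at hj
      rw [Lam]
      omega
    have hins : Finset.Icc (k + 1) g = insert (k + 1) (Finset.Icc (k + 2) g) := by
      ext x
      simp only [Finset.mem_Icc, Finset.mem_insert]
      omega
    rw [hins, Finset.sum_insert (by simp only [Finset.mem_Icc]; omega),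
      Finset.sum_congr rfl hLam1, Finset.sum_const, smul_eq_mul, mul_one, Nat.card_Icc]
    omega
end

section
/- Let r and s be coprime integers with 2 ≤ r < s, g = (r−1)(s−1)/2, N the increasing enumeration of the numerical semigroup generated by r and s, and Λ_i = g − N(i−1) + (i−1) for i = 1, …, g. Fix k with 0 ≤ k < g, let n_k = #{ℓ ∈ ℕ : N(ℓ) ≤ g−k−1}, and let (a_1, …, a_{n_k}; b_1, …, b_{n_k}) be the Frobenius characteristics of the truncated partition Λ^{[k]} = (Λ_{k+1}, …, Λ_g). Then for every i = 1, …, n_k there exists a unique integer ℓ_i with k+1 ≤ ℓ_i ≤ g such that Λ_{ℓ_i} + g − ℓ_i = a_i + b_i + 1; moreover ℓ_{n_k} = k+1, i.e. a_{n_k} + b_{n_k} + 1 = Λ_{k+1} + g − k − 1. -/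
/-- The parts of the truncated partition `Λ^{[k]} = (Λ_{k+1}, …, Λ_g)`
(zero beyond the `(g-k)`-th part). -/
def muTr (g k : ℕ) (N : ℕ → ℕ) (j : ℕ) : ℕ :=
  if k + j ≤ g then Lam g N (k + j) else 0

/-- The conjugate partition of `Λ^{[k]}`: `μ'_j = #{i : μ_i ≥ j}`. -/
def muConj (g k : ℕ) (N : ℕ → ℕ) (j : ℕ) : ℕ :=
  ((Finset.Icc 1 (g - k)).filter (fun i => j ≤ muTr g k N i)).card

/-- The arm coordinates `a_i = μ'_{ρ+1-i} - (ρ+1-i)` of the Frobenius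
characteristics of `Λ^{[k]}`, with `ρ = n_k`. -/
noncomputable def aChar (g k : ℕ) (N : ℕ → ℕ) (i : ℕ) : ℕ :=
  muConj g k N (nkDef g k N + 1 - i) - (nkDef g k N + 1 - i)

/-- The leg coordinates `b_i = μ_{ρ+1-i} - (ρ+1-i)` of the Frobenius
characteristics of `Λ^{[k]}`, with `ρ = n_k`. -/
noncomputable def bChar (g k : ℕ) (N : ℕ → ℕ) (i : ℕ) : ℕ :=
  muTr g k N (nkDef g k N + 1 - i) - (nkDef g k N + 1 - i)

/-!
Only the symmetry of `S = ⟨r, s⟩` matters: `S` contains every `x ≥ 2g`, and for `y < 2g`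
exactly one of `y`, `2g - 1 - y` lies in `S`. With `N = Nat.nth S`, the parts of `Λ^{[k]}` are
`μ_j = g + k + j - 1 - N(k + j - 1)` and `Λ_ℓ + g - ℓ = 2g - 1 - N(ℓ - 1)`, so the claim is
that `2g - 1 - h_j ∈ S` for the diagonal hooks `h_j = μ_j + μ'_j - 2j + 1`, `j ≤ n_k`.
Symmetry gives `#(S ∩ [0, g + k)) = k + n_k`, which makes `n_k` the rank. Now
`2g - 1 - h_j = N(k + j - 1) + c` with `c = (g - k) + j - 1 - μ'_j`, and `c ∈ S`: otherwise
`2g - 1 - c = N t` for some `t`, and the cell `(t - k + 1, j)` would have hook length zero,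
which no partition allows.
-/

open Finset

theorem Nat.count_reflect (q : ℕ → Prop) [DecidablePred q] (L : ℕ) :
    Nat.count (fun x => q (L - 1 - x)) L = Nat.count q L := by
  simp only [Nat.count_eq_card_filter_range, Finset.card_filter]
  exact Finset.sum_range_reflect (fun x => if q x then 1 else 0) L

theorem Nat.count_not_add_count (q : ℕ → Prop) [DecidablePred q] (L : ℕ) :
    Nat.count (fun x => ¬ q x) L + Nat.count q L = L := by
  simp only [Nat.count_eq_card_filter_range]
  rw [add_comm, Finset.card_filter_add_card_filter_not, Finset.card_range]

theorem StrictMono.eq_nth {p : ℕ → Prop} {f : ℕ → ℕ} (hp : (Set.ofPred p).Infinite)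
    (hf : StrictMono f) (hmem : ∀ n, p (f n)) (hsurj : ∀ m, p m → ∃ n, f n = m) :
    f = Nat.nth p := by
  have huniv : {n : ℕ | ∀ hf : (Set.ofPred p).Finite, n < hf.toFinset.card} = Set.univ :=
    Set.eq_univ_of_forall fun _ hfin => absurd hfin hp
  funext n
  refine Nat.eq_nth_of_strictMonoOn_of_mapsTo_of_surjOn f ?_ ?_ ?_ (huniv ▸ Set.mem_univ n)
  · rw [huniv]
    intro m hm
    obtain ⟨n, rfl⟩ := hsurj m hm
    exact ⟨n, trivial, rfl⟩
  · exact huniv ▸ fun n _ => hmem n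
  · exact huniv ▸ hf.strictMonoOn _

def conjugate (m : ℕ) (μ : ℕ → ℕ) (j : ℕ) : ℕ := #{i ∈ Icc 1 m | j ≤ μ i}

theorem muConj_eq_conjugate (g k : ℕ) (N : ℕ → ℕ) :
    muConj g k N = conjugate (g - k) (muTr g k N) := rfl

section Conjugate

variable {m : ℕ} {μ : ℕ → ℕ} {i j : ℕ}

theorem conjugate_le : conjugate m μ j ≤ m :=
  (card_filter_le _ _).trans (Nat.card_Icc 1 m).le

theorem le_conjugate (hμ : AntitoneOn μ (Set.Icc 1 m)) (hi : i ≤ m) (hj : j ≤ μ i) :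
    i ≤ conjugate m μ j := by
  have hsub : Icc 1 i ⊆ {i' ∈ Icc 1 m | j ≤ μ i'} := by
    intro i' hi'
    obtain ⟨h1, h2⟩ := mem_Icc.mp hi'
    refine mem_filter.mpr ⟨mem_Icc.mpr ⟨h1, h2.trans hi⟩, hj.trans ?_⟩
    exact hμ ⟨h1, h2.trans hi⟩ ⟨h1.trans h2, hi⟩ h2
  simpa [conjugate] using card_le_card hsub

theorem conjugate_lt (hμ : AntitoneOn μ (Set.Icc 1 m)) (hi : 1 ≤ i) (hj : μ i < j) :
    conjugate m μ j < i := by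
  have hsub : {i' ∈ Icc 1 m | j ≤ μ i'} ⊆ Ico 1 i := by
    intro i' hi'
    obtain ⟨hi'm, hji'⟩ := mem_filter.mp hi'
    obtain ⟨h1, h2⟩ := mem_Icc.mp hi'm
    refine mem_Ico.mpr ⟨h1, lt_of_not_ge fun hii' => ?_⟩
    exact absurd (hji'.trans (hμ ⟨hi, hii'.trans h2⟩ ⟨h1, h2⟩ hii')) (not_le.mpr hj)
  have := card_le_card hsub
  simp only [Nat.card_Ico] at this
  exact lt_of_le_of_lt this (by omega)

/-- The hook length `μ i + μ' j - i - j + 1` of a cell `(i, j)`, in the diagram or not, is never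
zero. -/
theorem add_conjugate_ne (hμ : AntitoneOn μ (Set.Icc 1 m)) (hi : 1 ≤ i) (him : i ≤ m) :
    μ i + conjugate m μ j ≠ i + j - 1 := by
  rcases le_or_gt j (μ i) with hj | hj
  · have := le_conjugate hμ him hj
    omega
  · have := conjugate_lt hμ hi hj
    omega

end Conjugate

/-- A symmetric numerical semigroup with Frobenius number `2 * g - 1`. -/
structure IsSymmetricSemigroup (p : ℕ → Prop) (g : ℕ) : Prop where
  zero_mem : p 0
  add_mem {x y : ℕ} : p x → p y → p (x + y)
  mem_of_two_mul_le {x : ℕ} : 2 * g ≤ x → p x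
  sub_mem_iff {y : ℕ} : y < 2 * g → (p (2 * g - 1 - y) ↔ ¬ p y)

theorem inSg_add {r s x y : ℕ} (hx : inSg r s x) (hy : inSg r s y) : inSg r s (x + y) := by
  obtain ⟨a, b, rfl⟩ := hx
  obtain ⟨c, d, rfl⟩ := hy
  exact ⟨a + c, b + d, by ring⟩

theorem exists_add_mul_eq_mul_of_not_inSg {r s x : ℕ} (hco : r.Coprime s) (hs : 0 < s)
    (hx : ¬ inSg r s x) : ∃ a b, a < s ∧ x + (b + 1) * s = a * r := by
  have : NeZero s := ⟨hs.ne'⟩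
  have hunit : IsUnit (r : ZMod s) := (ZMod.isUnit_iff_coprime r s).mpr hco
  set a := ((x : ZMod s) * (r : ZMod s)⁻¹).val
  have hmod : a * r ≡ x [MOD s] := by
    rw [← ZMod.natCast_eq_natCast_iff]
    push_cast
    rw [ZMod.natCast_zmod_val, mul_assoc, ZMod.inv_mul_of_unit _ hunit, mul_one]
  rcases le_or_gt (a * r) x with hle | hlt
  · obtain ⟨b, hb⟩ := (Nat.modEq_iff_dvd' hle).mp hmod
    exact absurd ⟨a, b, by rw [mul_comm b]; omega⟩ hx
  · obtain ⟨_ | b, hb⟩ := (Nat.modEq_iff_dvd' hlt.le).mp hmod.symm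
    · rw [mul_zero] at hb
      omega
    · exact ⟨a, b, ZMod.val_lt _, by rw [mul_comm (b + 1)]; omega⟩

theorem not_inSg_of_add_add_eq_mul {r s x : ℕ} (hco : r.Coprime s) (hs : 0 < s)
    (hx : x + r + s = r * s) : ¬ inSg r s x := by
  rintro ⟨a, b, rfl⟩
  have hsum : (b + 1) * s + (a + 1) * r = s * r := by linarith
  have hdvd : s ∣ (a + 1) * r := (Nat.dvd_add_right (dvd_mul_left s (b + 1))).mp <| by
    rw [hsum]; exact dvd_mul_right s r
  have hsa : s ≤ a + 1 := Nat.le_of_dvd a.succ_pos (hco.symm.dvd_of_dvd_mul_right hdvd)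
  nlinarith [Nat.mul_le_mul_right r hsa]

theorem isSymmetricSemigroup_inSg {r s g : ℕ} (hr : 2 ≤ r) (hs : 2 ≤ s) (hco : r.Coprime s)
    (hg : 2 * g = (r - 1) * (s - 1)) : IsSymmetricSemigroup (inSg r s) g := by
  have hF : 2 * g + r + s = r * s + 1 := by
    zify [show 1 ≤ r by omega, show 1 ≤ s by omega] at hg ⊢
    linear_combination hg
  have hg0 : 0 < g := by nlinarith
  have hfrob : ¬ inSg r s (2 * g - 1) := not_inSg_of_add_add_eq_mul hco (by omega) (by omega)
  refine ⟨⟨0, 0, by ring⟩, inSg_add, fun {x} hx => ?_,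
    fun {y} hy => ⟨fun hFy hy' => ?_, fun hy' => ?_⟩⟩
  · by_contra hnx
    obtain ⟨a, b, has, hab⟩ := exists_add_mul_eq_mul_of_not_inSg hco (by omega) hnx
    nlinarith [Nat.mul_le_mul_right r (show a + 1 ≤ s from has)]
  · exact hfrob (by simpa [show 2 * g - 1 - y + y = 2 * g - 1 by omega] using inSg_add hFy hy')
  · obtain ⟨a, b, has, hab⟩ := exists_add_mul_eq_mul_of_not_inSg hco (by omega) hy'
    obtain ⟨d, rfl⟩ : ∃ d, s = a + 1 + d := ⟨s - a - 1, by omega⟩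
    refine ⟨d, b, ?_⟩
    have : (a + 1 + d) * r = a * r + r + d * r := by ring
    have : r * (a + 1 + d) = (a + 1 + d) * r := by ring
    have : (b + 1) * (a + 1 + d) = b * (a + 1 + d) + (a + 1 + d) := by ring
    omega

namespace IsSymmetricSemigroup

variable {p : ℕ → Prop} {g : ℕ}

theorem infinite (hS : IsSymmetricSemigroup p g) : (Set.ofPred p).Infinite :=
  Set.infinite_of_forall_exists_gt fun a =>
    ⟨2 * g + a + 1, hS.mem_of_two_mul_le (by omega), by omega⟩

theorem not_mem_two_mul_sub_one (hS : IsSymmetricSemigroup p g) (hg : 0 < g) :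
    ¬ p (2 * g - 1) :=
  fun h => (hS.sub_mem_iff (y := 0) (by omega)).mp h hS.zero_mem

variable [DecidablePred p]

theorem count_add_count (hS : IsSymmetricSemigroup p g) {M L : ℕ} (hML : M + L = 2 * g) :
    Nat.count p (2 * g) + Nat.count p L = Nat.count p M + L := by
  have hrefl : Nat.count (fun x => p (M + x)) L = Nat.count (fun x => ¬ p (L - 1 - x)) L := by
    simp only [Nat.count_eq_card_filter_range]
    congr 1
    refine Finset.filter_congr fun x hx => ?_
    have hxL := Finset.mem_range.mp hx
    rw [← hS.sub_mem_iff (by omega), show 2 * g - 1 - (L - 1 - x) = M + x by omega]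
  rw [← hML, Nat.count_add, add_assoc, hrefl, Nat.count_reflect (fun x => ¬ p x),
    Nat.count_not_add_count]

theorem count_two_mul (hS : IsSymmetricSemigroup p g) : Nat.count p (2 * g) = g := by
  have := hS.count_add_count (M := 0) (L := 2 * g) (by omega)
  rw [Nat.count_zero] at this
  omega

theorem count_add (hS : IsSymmetricSemigroup p g) {k : ℕ} (hk : k ≤ g) :
    Nat.count p (g + k) = k + Nat.count p (g - k) := by
  have := hS.count_add_count (M := g + k) (L := g - k) (by omega)
  rw [hS.count_two_mul] at this
  omega

theorem nth_lt_iff (hS : IsSymmetricSemigroup p g) {ℓ M : ℕ} :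
    Nat.nth p ℓ < M ↔ ℓ < Nat.count p M :=
  (Nat.lt_nth_iff_count_lt hS.infinite).symm

theorem nth_lt_two_mul_iff (hS : IsSymmetricSemigroup p g) {ℓ : ℕ} :
    Nat.nth p ℓ < 2 * g ↔ ℓ < g := by
  rw [hS.nth_lt_iff, hS.count_two_mul]

theorem nth_lt_add (hS : IsSymmetricSemigroup p g) {ℓ : ℕ} (hℓ : ℓ < g) :
    Nat.nth p ℓ < g + ℓ := by
  have hlast : Nat.nth p (g - 1) < 2 * g := hS.nth_lt_two_mul_iff.mpr (by omega)
  have hne : Nat.nth p (g - 1) ≠ 2 * g - 1 := fun h =>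
    hS.not_mem_two_mul_sub_one (by omega) (h ▸ Nat.nth_mem_of_infinite hS.infinite _)
  have hgrow := (Nat.nth_strictMono hS.infinite).add_le_nat (g - 1 - ℓ) ℓ
  rw [show g - 1 - ℓ + ℓ = g - 1 by omega] at hgrow
  omega

variable {k : ℕ}

theorem lam_add_sub (hS : IsSymmetricSemigroup p g) {ℓ : ℕ} (hℓ1 : 1 ≤ ℓ) (hℓ : ℓ ≤ g) :
    Lam g (Nat.nth p) ℓ + g - ℓ = 2 * g - 1 - Nat.nth p (ℓ - 1) := by
  have := hS.nth_lt_add (ℓ := ℓ - 1) (by omega)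
  unfold Lam
  omega

theorem nth_add_muTr (hS : IsSymmetricSemigroup p g) {j : ℕ} (hj1 : 1 ≤ j) (hj : k + j ≤ g) :
    Nat.nth p (k + j - 1) + muTr g k (Nat.nth p) j = g + k + j - 1 := by
  have := hS.nth_lt_add (ℓ := k + j - 1) (by omega)
  rw [muTr, if_pos hj, Lam]
  omega

theorem one_le_muTr (hS : IsSymmetricSemigroup p g) {j : ℕ} (hj1 : 1 ≤ j) (hj : k + j ≤ g) :
    1 ≤ muTr g k (Nat.nth p) j := by
  have := hS.nth_lt_add (ℓ := k + j - 1) (by omega)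
  have := hS.nth_add_muTr hj1 hj
  omega

theorem antitoneOn_muTr (hS : IsSymmetricSemigroup p g) :
    AntitoneOn (muTr g k (Nat.nth p)) (Set.Icc 1 (g - k)) := by
  rintro i ⟨hi1, hi⟩ j ⟨hj1, hj⟩ hij
  have hgrow := (Nat.nth_strictMono hS.infinite).add_le_nat (j - i) (k + i - 1)
  rw [show j - i + (k + i - 1) = k + j - 1 by omega] at hgrow
  have := hS.nth_add_muTr (k := k) hi1 (by omega)
  have := hS.nth_add_muTr (k := k) hj1 (by omega)
  omega

theorem nkDef_eq (hS : IsSymmetricSemigroup p g) (hk : k < g) :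
    nkDef g k (Nat.nth p) = Nat.count p (g - k) := by
  have : {ℓ | Nat.nth p ℓ ≤ g - k - 1} = Set.Iio (Nat.count p (g - k)) := by
    ext ℓ
    rw [Set.mem_Iio, ← hS.nth_lt_iff, Set.mem_ofPred_eq]
    omega
  rw [nkDef, this, Set.ncard_Iio_nat]

theorem le_muTr (hS : IsSymmetricSemigroup p g) (hk : k ≤ g) {j : ℕ}
    (hj : j ≤ Nat.count p (g - k)) : j ≤ muTr g k (Nat.nth p) j := by
  rcases Nat.eq_zero_or_pos j with rfl | hj1
  · exact Nat.zero_le _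
  have hcount : Nat.count p (g - k) ≤ g - k := Nat.count_le _
  have hlt : Nat.nth p (k + j - 1) < g + k := by
    rw [hS.nth_lt_iff, hS.count_add hk]
    omega
  have := hS.nth_add_muTr (k := k) hj1 (by omega)
  omega

theorem exists_nth_add_hook (hS : IsSymmetricSemigroup p g) (hk : k < g) {j : ℕ} (hj1 : 1 ≤ j)
    (hj : j ≤ Nat.count p (g - k)) :
    ∃ t, k ≤ t ∧
      Nat.nth p t + ((muConj g k (Nat.nth p) j - j) + (muTr g k (Nat.nth p) j - j) + 1)
        = 2 * g - 1 := by
  rw [muConj_eq_conjugate]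
  have hcount : Nat.count p (g - k) ≤ g - k := Nat.count_le _
  have hμ : AntitoneOn (muTr g k (Nat.nth p)) (Set.Icc 1 (g - k)) := hS.antitoneOn_muTr
  have hμj : j ≤ muTr g k (Nat.nth p) j := hS.le_muTr hk.le hj
  have hnj := hS.nth_add_muTr (k := k) hj1 (by omega)
  have hμ'j : j ≤ conjugate (g - k) (muTr g k (Nat.nth p)) j := le_conjugate hμ (by omega) hμj
  have hμ'le : conjugate (g - k) (muTr g k (Nat.nth p)) j ≤ g - k := conjugate_le
  set c := g - k + j - 1 - conjugate (g - k) (muTr g k (Nat.nth p)) j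
  have hc : p c := by
    by_contra hc
    have hmem := (hS.sub_mem_iff (y := c) (by omega)).mpr hc
    set t := Nat.count p (2 * g - 1 - c)
    have ht : Nat.nth p t = 2 * g - 1 - c := Nat.nth_count hmem
    have hjt : k + j - 1 < t := (Nat.nth_lt_nth hS.infinite).mp (by omega)
    have htg : t < g := hS.nth_lt_two_mul_iff.mp (by omega)
    have hnt := hS.nth_add_muTr (k := k) (j := t - k + 1) (by omega) (by omega)
    rw [show k + (t - k + 1) - 1 = t by omega] at hnt
    exact add_conjugate_ne hμ (i := t - k + 1) (j := j) (by omega) (by omega) (by omega)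
  have hv : p (Nat.nth p (k + j - 1) + c) :=
    hS.add_mem (Nat.nth_mem_of_infinite hS.infinite _) hc
  refine ⟨Nat.count p (Nat.nth p (k + j - 1) + c), ?_, ?_⟩
  · rw [← Nat.nth_le_nth hS.infinite, Nat.nth_count hv]
    exact ((Nat.nth_monotone hS.infinite) (by omega : k ≤ k + j - 1)).trans (Nat.le_add_right _ _)
  · rw [Nat.nth_count hv]
    omega

theorem existsUnique_lam_eq (hS : IsSymmetricSemigroup p g) (hk : k < g) {i : ℕ} (hi1 : 1 ≤ i)
    (hi : i ≤ nkDef g k (Nat.nth p)) :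
    ∃! ℓ : ℕ, k + 1 ≤ ℓ ∧ ℓ ≤ g ∧
      Lam g (Nat.nth p) ℓ + g - ℓ = aChar g k (Nat.nth p) i + bChar g k (Nat.nth p) i + 1 := by
  rw [hS.nkDef_eq hk] at hi
  obtain ⟨t, hkt, ht⟩ :=
    hS.exists_nth_add_hook hk (j := Nat.count p (g - k) + 1 - i) (by omega) (by omega)
  have hab :
      aChar g k (Nat.nth p) i + bChar g k (Nat.nth p) i + 1 = 2 * g - 1 - Nat.nth p t := by
    simp only [aChar, bChar, hS.nkDef_eq hk]
    omega
  have htg : t < g := hS.nth_lt_two_mul_iff.mp (by omega)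
  refine ⟨t + 1, ⟨by omega, by omega, ?_⟩, fun ℓ ⟨hℓ1, hℓg, hℓ⟩ => ?_⟩
  · rw [hS.lam_add_sub (by omega) (by omega), hab, Nat.add_sub_cancel]
  · rw [hS.lam_add_sub (by omega) hℓg, hab] at hℓ
    have : Nat.nth p (ℓ - 1) < 2 * g := hS.nth_lt_two_mul_iff.mpr (by omega)
    have := Nat.nth_injective hS.infinite (show Nat.nth p (ℓ - 1) = Nat.nth p t by omega)
    omega

theorem aChar_add_bChar_nkDef (hS : IsSymmetricSemigroup p g) (hk : k < g) :
    aChar g k (Nat.nth p) (nkDef g k (Nat.nth p))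
        + bChar g k (Nat.nth p) (nkDef g k (Nat.nth p)) + 1
      = Lam g (Nat.nth p) (k + 1) + g - (k + 1) := by
  have hμ1 := hS.one_le_muTr (k := k) (j := 1) le_rfl (by omega)
  have hμlast := hS.one_le_muTr (k := k) (j := g - k) (by omega) (by omega)
  have hconj : conjugate (g - k) (muTr g k (Nat.nth p)) 1 = g - k :=
    le_antisymm conjugate_le (le_conjugate hS.antitoneOn_muTr le_rfl hμlast)
  simp only [aChar, bChar, Nat.add_sub_cancel_left, muConj_eq_conjugate, hconj]
  rw [muTr, if_pos (by omega)] at hμ1 ⊢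
  omega

end IsSymmetricSemigroup

theorem frobenius_hook_indices_general (r s g : ℕ) (N : ℕ → ℕ)
    (hco : Nat.Coprime r s)
    (hg : 2 * g = (r - 1) * (s - 1))
    (hmono : StrictMono N)
    (hmem : ∀ n, inSg r s (N n))
    (hsurj : ∀ m, inSg r s m → ∃ n, N n = m)
    (k : ℕ) (hk : k < g) :
    (∀ i : ℕ, 1 ≤ i → i ≤ nkDef g k N →
      ∃! ℓ : ℕ, k + 1 ≤ ℓ ∧ ℓ ≤ g ∧
        Lam g N ℓ + g - ℓ = aChar g k N i + bChar g k N i + 1) ∧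
    aChar g k N (nkDef g k N) + bChar g k N (nkDef g k N) + 1
      = Lam g N (k + 1) + g - (k + 1) := by
  classical
  obtain ⟨hr, hs⟩ := mul_ne_zero_iff.mp (show (r - 1) * (s - 1) ≠ 0 by omega)
  have hS := isSymmetricSemigroup_inSg (by omega) (by omega) hco hg
  obtain rfl := hmono.eq_nth hS.infinite hmem hsurj
  exact ⟨fun i hi1 hi => hS.existsUnique_lam_eq hk hi1 hi, hS.aChar_add_bChar_nkDef hk⟩

/-- For each `i = 1, …, n_k` there is a unique `ℓ_i ∈ {k+1, …, g}` with
`Λ_{ℓ_i} + g - ℓ_i = a_i + b_i + 1`; moreover `ℓ_{n_k} = k + 1`. -/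
theorem frobenius_hook_indices (r s g : ℕ) (N : ℕ → ℕ)
    (hr : 2 ≤ r) (hrs : r < s) (hco : Nat.Coprime r s)
    (hg : 2 * g = (r - 1) * (s - 1))
    (hmono : StrictMono N)
    (hmem : ∀ n, inSg r s (N n))
    (hsurj : ∀ m, inSg r s m → ∃ n, N n = m)
    (k : ℕ) (hk : k < g) :
    (∀ i : ℕ, 1 ≤ i → i ≤ nkDef g k N →
      ∃! ℓ : ℕ, k + 1 ≤ ℓ ∧ ℓ ≤ g ∧
        Lam g N ℓ + g - ℓ = aChar g k N i + bChar g k N i + 1) ∧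
    aChar g k N (nkDef g k N) + bChar g k N (nkDef g k N) + 1
      = Lam g N (k + 1) + g - (k + 1) :=
  frobenius_hook_indices_general r s g N hco hg hmono hmem hsurj k hk
end
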